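/- arXiv:1606.03744 — 11 statements merged into one kernel-verified Lean document; each statement's English description precedes it below -/
import Mathlib

section
/- Let k, l be integers with k ≥ 1 and l ≥ 1, and let g : ℝ × ℤ → Mat(m×m, ℂ) be invertible and entrywise differentiable in t, satisfying (g g_{(k)}^{-1})_t = g g_{(l)}^{-1} − (g g_{(l)}^{-1})_{(k−l)}. Then V := g g_{(1)}^{-1} satisfies the generalized Volterra lattice equation (V V_{(1)} ⋯ V_{(k−1)})_t = V V_{(1)} ⋯ V_{(l−1)} − V_{(k−l)} V_{(k−l+1)} ⋯ V_{(k−1)}. -/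
open Matrix

/-- Ordered product `V_(a) V_(a+1) ⋯ V_(a+n-1)` of an `ℤ`-indexed family of matrices,
with indices increasing from left to right (the empty product is the identity matrix). -/
noncomputable def ordProd {m : ℕ} (V : ℤ → Matrix (Fin m) (Fin m) ℂ) (a : ℤ) (n : ℕ) :
    Matrix (Fin m) (Fin m) ℂ :=
  ((List.range n).map fun i => V (a + (i : ℤ))).prod

lemma telescope {m : ℕ} (g : ℤ → Matrix (Fin m) (Fin m) ℂ) (hg : ∀ j, IsUnit (g j))
    (a : ℤ) (n : ℕ) :
    ordProd (fun i => g i * (g (i + 1))⁻¹) a n = g a * (g (a + n))⁻¹ := by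
  induction n with
  | zero =>
      simp [ordProd, Matrix.mul_nonsing_inv _ ((Matrix.isUnit_iff_isUnit_det _).mp (hg a))]
  | succ n ih =>
      have hstep : ordProd (fun i => g i * (g (i + 1))⁻¹) a (n + 1)
          = ordProd (fun i => g i * (g (i + 1))⁻¹) a n
            * (g (a + n) * (g (a + n + 1))⁻¹) := by
        simp [ordProd, List.range_succ]
      rw [hstep, ih, mul_assoc, ← mul_assoc (g (a + (n : ℤ)))⁻¹,
        Matrix.nonsing_inv_mul _ ((Matrix.isUnit_iff_isUnit_det _).mp (hg (a + n))),
        one_mul]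
      push_cast
      ring_nf

/-- if `g` is an invertible, entrywise `t`-differentiable solution of
`(g g_{(k)}⁻¹)_t = g g_{(l)}⁻¹ − (g g_{(l)}⁻¹)_{(k−l)}` (with `k ≥ 1`, `l ≥ 1`), then
`V := g g_{(1)}⁻¹` satisfies
`(V V_{(1)} ⋯ V_{(k−1)})_t = V V_{(1)} ⋯ V_{(l−1)} − V_{(k−l)} ⋯ V_{(k−1)}`. -/
theorem stmt_0 (m : ℕ) (k l : ℤ) (hk : 1 ≤ k) (hl : 1 ≤ l)
    (g : ℝ → ℤ → Matrix (Fin m) (Fin m) ℂ)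
    (hginv : ∀ t j, IsUnit (g t j))
    (hgdiff : ∀ t j (a b : Fin m), DifferentiableAt ℝ (fun s => g s j a b) t)
    (heq : ∀ t j (a b : Fin m),
      HasDerivAt (fun s => (g s j * (g s (j + k))⁻¹) a b)
        ((g t j * (g t (j + l))⁻¹ - g t (j + (k - l)) * (g t (j + k))⁻¹) a b) t) :
    ∀ t j (a b : Fin m),
      HasDerivAt
        (fun s => ordProd (fun i => g s i * (g s (i + 1))⁻¹) j k.toNat a b)
        ((ordProd (fun i => g t i * (g t (i + 1))⁻¹) j l.toNat
          - ordProd (fun i => g t i * (g t (i + 1))⁻¹) (j + (k - l)) l.toNat) a b) t := by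
  intro t j a b
  have hk' : (k.toNat : ℤ) = k := Int.toNat_of_nonneg (by linarith)
  have hl' : (l.toNat : ℤ) = l := Int.toNat_of_nonneg (by linarith)
  have h1 : ∀ s, ordProd (fun i => g s i * (g s (i + 1))⁻¹) j k.toNat
      = g s j * (g s (j + k))⁻¹ := by
    intro s; rw [telescope _ (hginv s), hk']
  have h2 : ordProd (fun i => g t i * (g t (i + 1))⁻¹) j l.toNat
      = g t j * (g t (j + l))⁻¹ := by
    rw [telescope _ (hginv t), hl']
  have h3 : ordProd (fun i => g t i * (g t (i + 1))⁻¹) (j + (k - l)) l.toNat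
      = g t (j + (k - l)) * (g t (j + k))⁻¹ := by
    rw [telescope _ (hginv t), hl']
    congr 2
    ring
  simp only [h1, h2, h3]
  exact heq t j a b
end

section
/- Let k, l be integers with k ≥ 1 and l ≤ −1, and let g : ℝ × ℤ → Mat(m×m, ℂ) be invertible and entrywise differentiable in t, satisfying (g g_{(k)}^{-1})_t = g g_{(l)}^{-1} − (g g_{(l)}^{-1})_{(k−l)}. Then V := g g_{(1)}^{-1} (which is invertible) satisfies the generalized Volterra lattice equation (V V_{(1)} ⋯ V_{(k−1)})_t = V_{(−1)}^{-1} V_{(−2)}^{-1} ⋯ V_{(l)}^{-1} − V_{(k−l−1)}^{-1} V_{(k−l−2)}^{-1} ⋯ V_{(k)}^{-1}, where in the two products of inverses the indices decrease from left to right. -/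
open Matrix

/-- Ordered product of inverses `V_(a)⁻¹ V_(a-1)⁻¹ ⋯ V_(a-n+1)⁻¹`, with indices decreasing
from left to right. -/
noncomputable def descInvProd {m : ℕ} (V : ℤ → Matrix (Fin m) (Fin m) ℂ) (a : ℤ) (n : ℕ) :
    Matrix (Fin m) (Fin m) ℂ :=
  ((List.range n).map fun i => (V (a - (i : ℤ)))⁻¹).prod

lemma ordProd_succ {m : ℕ} (V : ℤ → Matrix (Fin m) (Fin m) ℂ) (a : ℤ) (n : ℕ) :
    ordProd V a (n + 1) = ordProd V a n * V (a + n) := by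
  simp [ordProd, List.range_succ]

lemma descInvProd_succ {m : ℕ} (V : ℤ → Matrix (Fin m) (Fin m) ℂ) (a : ℤ) (n : ℕ) :
    descInvProd V a (n + 1) = descInvProd V a n * (V (a - n))⁻¹ := by
  simp [descInvProd, List.range_succ]

lemma ordProd_telescope {m : ℕ} (h : ℝ → ℤ → Matrix (Fin m) (Fin m) ℂ)
    (hinv : ∀ t j, IsUnit (h t j)) (t : ℝ) (a : ℤ) (n : ℕ) :
    ordProd (fun i => h t i * (h t (i + 1))⁻¹) a n = h t a * (h t (a + n))⁻¹ := by
  induction n with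
  | zero =>
    simp [ordProd, Matrix.mul_nonsing_inv _ ((Matrix.isUnit_iff_isUnit_det _).1 (hinv t a))]
  | succ n ih =>
    rw [ordProd_succ, ih]
    push_cast
    rw [Matrix.mul_assoc, ← Matrix.mul_assoc (h t (a + n))⁻¹,
      Matrix.nonsing_inv_mul _ ((Matrix.isUnit_iff_isUnit_det _).1 (hinv t (a + n))),
      Matrix.one_mul, ← add_assoc]

lemma descInvProd_telescope {m : ℕ} (h : ℝ → ℤ → Matrix (Fin m) (Fin m) ℂ)
    (hinv : ∀ t j, IsUnit (h t j)) (t : ℝ) (a : ℤ) (n : ℕ) :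
    descInvProd (fun i => h t i * (h t (i + 1))⁻¹) a n = h t (a + 1) * (h t (a + 1 - n))⁻¹ := by
  induction n with
  | zero =>
    simp [descInvProd, Matrix.mul_nonsing_inv _
      ((Matrix.isUnit_iff_isUnit_det _).1 (hinv t (a + 1)))]
  | succ n ih =>
    rw [descInvProd_succ, ih]
    have hdet : ∀ j : ℤ, IsUnit (h t j).det :=
      fun j => (Matrix.isUnit_iff_isUnit_det _).1 (hinv t j)
    rw [Matrix.mul_inv_rev, Matrix.nonsing_inv_nonsing_inv _ (hdet _)]
    push_cast
    rw [Matrix.mul_assoc, ← Matrix.mul_assoc (h t (a + 1 - n))⁻¹]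
    have : a - n + 1 = a + 1 - n := by ring
    rw [this, Matrix.nonsing_inv_mul _ (hdet _), Matrix.one_mul]
    congr 2
    ring

/-- if `g` is an invertible, entrywise `t`-differentiable solution of
`(g g_{(k)}⁻¹)_t = g g_{(l)}⁻¹ − (g g_{(l)}⁻¹)_{(k−l)}` (with `k ≥ 1`, `l ≤ −1`), then
`V := g g_{(1)}⁻¹` is invertible and satisfies
`(V V_{(1)} ⋯ V_{(k−1)})_t = V_{(−1)}⁻¹ V_{(−2)}⁻¹ ⋯ V_{(l)}⁻¹ − V_{(k−l−1)}⁻¹ ⋯ V_{(k)}⁻¹`. -/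
theorem stmt_1 (m : ℕ) (k l : ℤ) (hk : 1 ≤ k) (hl : l ≤ -1)
    (g : ℝ → ℤ → Matrix (Fin m) (Fin m) ℂ)
    (hginv : ∀ t j, IsUnit (g t j))
    (hgdiff : ∀ t j (a b : Fin m), DifferentiableAt ℝ (fun s => g s j a b) t)
    (heq : ∀ t j (a b : Fin m),
      HasDerivAt (fun s => (g s j * (g s (j + k))⁻¹) a b)
        ((g t j * (g t (j + l))⁻¹ - g t (j + (k - l)) * (g t (j + k))⁻¹) a b) t) :
    (∀ t j, IsUnit (g t j * (g t (j + 1))⁻¹)) ∧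
    (∀ t j (a b : Fin m),
      HasDerivAt
        (fun s => ordProd (fun i => g s i * (g s (i + 1))⁻¹) j k.toNat a b)
        ((descInvProd (fun i => g t i * (g t (i + 1))⁻¹) (j - 1) (-l).toNat
          - descInvProd (fun i => g t i * (g t (i + 1))⁻¹) (j + (k - l) - 1) (-l).toNat) a b) t) := by
  have hdet : ∀ t (j : ℤ), IsUnit (g t j).det :=
    fun t j => (Matrix.isUnit_iff_isUnit_det _).1 (hginv t j)
  have hVunit : ∀ t j, IsUnit (g t j * (g t (j + 1))⁻¹) := by
    intro t j
    exact (hginv t j).mul ((Matrix.isUnit_nonsing_inv_iff).2 (hginv t (j + 1)))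
  refine ⟨hVunit, ?_⟩
  intro t j a b
  have hkN : (k.toNat : ℤ) = k := Int.toNat_of_nonneg (by omega)
  have hlN : ((-l).toNat : ℤ) = -l := Int.toNat_of_nonneg (by omega)
  have h1 : ∀ s : ℝ, ordProd (fun i => g s i * (g s (i + 1))⁻¹) j k.toNat
      = g s j * (g s (j + k))⁻¹ := by
    intro s
    rw [ordProd_telescope g hginv s j k.toNat, hkN]
  have h2 : descInvProd (fun i => g t i * (g t (i + 1))⁻¹) (j - 1) (-l).toNat
      = g t j * (g t (j + l))⁻¹ := by
    rw [descInvProd_telescope g hginv t _ _, hlN]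
    congr 2 <;> ring
  have h3 : descInvProd (fun i => g t i * (g t (i + 1))⁻¹) (j + (k - l) - 1) (-l).toNat
      = g t (j + (k - l)) * (g t (j + k))⁻¹ := by
    rw [descInvProd_telescope g hginv t _ _, hlN]
    congr 2 <;> ring
  rw [Matrix.sub_apply, h2, h3, ← Matrix.sub_apply]
  have := heq t j a b
  refine this.congr_of_eventuallyEq ?_
  filter_upwards [] with s
  rw [h1 s]
end

section
/- Let V : ℝ × ℤ → Mat(m×m, ℂ) be invertible and entrywise differentiable in t, satisfying V_t = V_{(−1)}^{-1} − V_{(1)}^{-1} (the generalized Volterra lattice equation with k = 1, l = −1). Then U := V^{-1} satisfies the modified Volterra lattice equation U_t = U (U_{(1)} − U_{(−1)}) U. -/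
/-!
Since `U = V⁻¹`, differentiation of matrix inversion gives `U_t = -U V_t U`, and substituting
the lattice equation `V_t = U_{(-1)} - U_{(1)}` turns this into `U_t = U (U_{(1)} - U_{(-1)}) U`.
-/

namespace Matrix

variable {𝕜 α m n : Type*} [NontriviallyNormedField 𝕜]

theorem hasDerivAt_iff_forall_apply [NormedAddCommGroup α] [NormedSpace 𝕜 α] [Fintype n]
    {f : 𝕜 → Matrix m n α} {f' : Matrix m n α} {t : 𝕜} :
    HasDerivAt f f' t ↔ ∀ i j, HasDerivAt (fun s => f s i j) (f' i j) t :=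
  hasDerivAt_pi.trans (forall_congr' fun _ => hasDerivAt_pi)

variable [NormedCommRing α] [NormedAlgebra 𝕜 α] [CompleteSpace α] [Fintype n] [DecidableEq n]
  {f : 𝕜 → Matrix n n α} {f' : Matrix n n α} {t : 𝕜}

theorem _root_.HasDerivAt.matrix_inv (hf : HasDerivAt f f' t) (hft : IsUnit (f t)) :
    HasDerivAt (fun s => (f s)⁻¹) (-((f t)⁻¹ * f' * (f t)⁻¹)) t := by
  -- `HasDerivAt` only sees the product topology, which the `L∞`-operator norm induces while
  -- making the matrices a complete normed algebra.
  let _ := Matrix.linftyOpNormedRing (n := n) (α := α)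
  let _ := Matrix.linftyOpNormedAlgebra (R := 𝕜) (n := n) (α := α)
  have : HasSummableGeomSeries (Matrix n n α) :=
    @instHasSummableGeomSeriesOfCompleteSpace _ _ (inferInstanceAs (CompleteSpace (n → n → α)))
  obtain ⟨u, hu⟩ := hft
  have hinv := (hu ▸ hasFDerivAt_ringInverse (𝕜 := 𝕜) u).comp_hasDerivAt t hf
  simp only [coe_units_inv, hu, Function.comp_def, ← nonsing_inv_eq_ringInverse] at hinv
  exact hinv

theorem hasDerivAt_inv_apply (hf : ∀ i j, HasDerivAt (fun s => f s i j) (f' i j) t)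
    (hft : IsUnit (f t)) (i j : n) :
    HasDerivAt (fun s => (f s)⁻¹ i j) ((-((f t)⁻¹ * f' * (f t)⁻¹)) i j) t :=
  hasDerivAt_iff_forall_apply.1 ((hasDerivAt_iff_forall_apply.2 hf).matrix_inv hft) i j

end Matrix

/-- if `V` is invertible, entrywise differentiable in `t`, and satisfies the
generalized Volterra lattice equation `V_t = V_{(−1)}⁻¹ − V_{(1)}⁻¹` (case `k = 1`, `l = −1`),
then `U := V⁻¹` satisfies the modified Volterra lattice equation
`U_t = U (U_{(1)} − U_{(−1)}) U`. -/
theorem stmt_2 (m : ℕ) (V Vt : ℝ → ℤ → Matrix (Fin m) (Fin m) ℂ)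
    (hVinv : ∀ t j, IsUnit (V t j))
    (hVt : ∀ t j (a b : Fin m), HasDerivAt (fun s => V s j a b) (Vt t j a b) t)
    (heq : ∀ t j, Vt t j = (V t (j - 1))⁻¹ - (V t (j + 1))⁻¹) :
    ∀ t j (a b : Fin m),
      HasDerivAt (fun s => (V s j)⁻¹ a b)
        (((V t j)⁻¹ * ((V t (j + 1))⁻¹ - (V t (j - 1))⁻¹) * (V t j)⁻¹) a b) t := by
  intro t j a b
  have hrhs : -((V t j)⁻¹ * Vt t j * (V t j)⁻¹) =
      (V t j)⁻¹ * ((V t (j + 1))⁻¹ - (V t (j - 1))⁻¹) * (V t j)⁻¹ := by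
    rw [heq]
    noncomm_ring
  simpa only [hrhs] using Matrix.hasDerivAt_inv_apply (hVt t j) (hVinv t j) a b
end

section
/- Let g : ℝ × ℤ × ℤ → Mat(m×m, ℂ) be invertible and entrywise differentiable in t. Then g satisfies (g_t g^{-1})_{,1} − g_t g^{-1} = g_{,2} g_{,1}^{-1} − (g_{,2} g_{,1}^{-1})_{,-2} if and only if h := g^{-1} satisfies the semi-discrete chiral model equation (h h_{,1}^{-1})_t + (h h_{,2}^{-1})_{,1,-2} − h h_{,2}^{-1} = 0. -/
open Matrix

/-
With `h = g⁻¹` we have `h h_{,1}⁻¹ = g⁻¹ g_{,1}` and `h h_{,2}⁻¹ = g⁻¹ g_{,2}`. The derivative of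
`g⁻¹ g_{,1}` is `g⁻¹ ((g_t g⁻¹)_{,1} − g_t g⁻¹) g_{,1}`, and
`g⁻¹ g_{,2} − (g⁻¹ g_{,2})_{,1,-2} = g⁻¹ (g_{,2} g_{,1}⁻¹ − (g_{,2} g_{,1}⁻¹)_{,-2}) g_{,1}`.
Conjugation `X ↦ g⁻¹ X g_{,1}` is injective, so the two equations are equivalent.
-/

attribute [local instance] Matrix.linftyOpNormedRing Matrix.linftyOpNormedAlgebra

section MatrixDerivatives

variable {𝕜 α n : Type*} [NontriviallyNormedField 𝕜] [NormedField α] [NormedAlgebra 𝕜 α]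
  [Fintype n] {t : 𝕜}

theorem hasDerivAt_matrix_iff {f : 𝕜 → Matrix n n α} {f' : Matrix n n α} :
    HasDerivAt f f' t ↔ ∀ a b, HasDerivAt (fun s => f s a b) (f' a b) t :=
  hasDerivAt_pi.trans (forall_congr' fun _ => hasDerivAt_pi)

variable [DecidableEq n]

theorem HasDerivAt.matrix_inv_s3 [CompleteSpace α] {f : 𝕜 → Matrix n n α} {f' : Matrix n n α}
    (h : HasDerivAt f f' t) (hu : IsUnit (f t)) :
    HasDerivAt (fun s => (f s)⁻¹) (-((f t)⁻¹ * f' * (f t)⁻¹)) t := by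
  -- instance search does not see that the `linftyOp` uniformity is the (complete) product one
  have : @CompleteSpace (Matrix n n α) (Matrix.linftyOpNormedRing (α := α)).toUniformSpace :=
    inferInstanceAs (CompleteSpace (n → n → α))
  obtain ⟨u, hu⟩ := hu
  have := (hu ▸ hasFDerivAt_ringInverse (𝕜 := 𝕜) u).comp_hasDerivAt t h
  simp_rw [Function.comp_def, ← Matrix.nonsing_inv_eq_ringInverse] at this
  refine this.congr_deriv ?_
  simp [coe_units_inv, hu, Matrix.mul_assoc]

theorem HasDerivAt.matrix_inv_mul [CompleteSpace α] {A B : 𝕜 → Matrix n n α}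
    {A' B' : Matrix n n α} (hA : HasDerivAt A A' t) (hB : HasDerivAt B B' t)
    (hAu : IsUnit (A t)) (hBu : IsUnit (B t)) :
    HasDerivAt (fun s => (A s)⁻¹ * B s) ((A t)⁻¹ * (B' * (B t)⁻¹ - A' * (A t)⁻¹) * B t) t := by
  refine ((hA.matrix_inv_s3 hAu).fun_mul hB).congr_deriv ?_
  rw [isUnit_iff_isUnit_det] at hAu hBu
  simp only [Matrix.mul_sub, Matrix.sub_mul, Matrix.mul_assoc, nonsing_inv_mul _ hBu,
    Matrix.mul_one, Matrix.neg_mul]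
  abel

theorem hasDerivAt_matrix_inv_mul_iff [CompleteSpace α] {A B : 𝕜 → Matrix n n α}
    {A' B' C E : Matrix n n α} (hA : HasDerivAt A A' t) (hB : HasDerivAt B B' t)
    (hAu : IsUnit (A t)) (hBu : IsUnit (B t)) :
    HasDerivAt (fun s => (A s)⁻¹ * B s) ((A t)⁻¹ * C - E⁻¹ * B t) t
      ↔ B' * (B t)⁻¹ - A' * (A t)⁻¹ = C * (B t)⁻¹ - A t * E⁻¹ := by
  have hD := hA.matrix_inv_mul hB hAu hBu
  have hconj : ∀ X Y, (A t)⁻¹ * X * B t = (A t)⁻¹ * Y * B t ↔ X = Y := fun X Y => by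
    rw [hBu.mul_left_inj, ((isUnit_nonsing_inv_iff).mpr hAu).mul_right_inj]
  rw [isUnit_iff_isUnit_det] at hAu hBu
  have hrhs : (A t)⁻¹ * C - E⁻¹ * B t = (A t)⁻¹ * (C * (B t)⁻¹ - A t * E⁻¹) * B t := by
    simp only [Matrix.mul_sub, Matrix.sub_mul, Matrix.mul_assoc, nonsing_inv_mul _ hBu,
      nonsing_inv_mul_cancel_left _ _ hAu, Matrix.mul_one]
  rw [hrhs, ← hconj]
  exact ⟨hD.unique, fun h => h ▸ hD⟩

end MatrixDerivatives

/-- an invertible, entrywise `t`-differentiable `g : ℝ × ℤ × ℤ → Mat(m×m,ℂ)`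
satisfies `(g_t g⁻¹)_{,1} − g_t g⁻¹ = g_{,2} g_{,1}⁻¹ − (g_{,2} g_{,1}⁻¹)_{,-2}` if and only if
`h := g⁻¹` satisfies the semi-discrete chiral model equation
`(h h_{,1}⁻¹)_t + (h h_{,2}⁻¹)_{,1,-2} − h h_{,2}⁻¹ = 0`. -/
theorem stmt_3 (m : ℕ) (g gt : ℝ → ℤ → ℤ → Matrix (Fin m) (Fin m) ℂ)
    (hginv : ∀ t j₁ j₂, IsUnit (g t j₁ j₂))
    (hgt : ∀ t j₁ j₂ (a b : Fin m), HasDerivAt (fun s => g s j₁ j₂ a b) (gt t j₁ j₂ a b) t) :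
    (∀ t j₁ j₂,
        gt t (j₁ + 1) j₂ * (g t (j₁ + 1) j₂)⁻¹ - gt t j₁ j₂ * (g t j₁ j₂)⁻¹
          = g t j₁ (j₂ + 1) * (g t (j₁ + 1) j₂)⁻¹ - g t j₁ j₂ * (g t (j₁ + 1) (j₂ - 1))⁻¹)
    ↔ (∀ t j₁ j₂ (a b : Fin m),
        HasDerivAt (fun s => ((g s j₁ j₂)⁻¹ * ((g s (j₁ + 1) j₂)⁻¹)⁻¹) a b)
          (((g t j₁ j₂)⁻¹ * ((g t j₁ (j₂ + 1))⁻¹)⁻¹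
            - (g t (j₁ + 1) (j₂ - 1))⁻¹ * ((g t (j₁ + 1) j₂)⁻¹)⁻¹) a b) t) := by
  have hinv_inv : ∀ t j₁ j₂, ((g t j₁ j₂)⁻¹)⁻¹ = g t j₁ j₂ := fun t j₁ j₂ =>
    nonsing_inv_nonsing_inv _ ((isUnit_iff_isUnit_det _).mp (hginv t j₁ j₂))
  have hg : ∀ t j₁ j₂, HasDerivAt (fun s => g s j₁ j₂) (gt t j₁ j₂) t := fun t j₁ j₂ =>
    hasDerivAt_matrix_iff.mpr (hgt t j₁ j₂)
  simp only [hinv_inv]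
  refine forall_congr' fun t => forall_congr' fun j₁ => forall_congr' fun j₂ => ?_
  rw [← hasDerivAt_matrix_iff (f := fun s => (g s j₁ j₂)⁻¹ * g s (j₁ + 1) j₂)]
  exact (hasDerivAt_matrix_inv_mul_iff (hg t j₁ j₂) (hg t (j₁ + 1) j₂) (hginv t j₁ j₂)
    (hginv t (j₁ + 1) j₂)).symm
end

section
/- Let k, l be integers with k ≥ 1 and l ≥ 1, I the m×m identity matrix, and let φ : ℝ × ℤ → Mat(m×m, ℂ) be entrywise differentiable in t, satisfying (φ_{(k)} − φ)_t = (φ_{(l)} − φ)(φ_{(k)} − φ + I) − (φ_{(k)} − φ + I)(φ_{(l)} − φ)_{(k−l)}. Then W := φ_{(1)} − φ + (1/k) I satisfies the generalized Volterra lattice equation (Σ_{i=0}^{k−1} W_{(i)})_t = (Σ_{i=0}^{l−1} W_{(i)})(Σ_{i=0}^{k−1} W_{(i)}) − (Σ_{i=0}^{k−1} W_{(i)})(Σ_{i=k−l}^{k−1} W_{(i)}). -/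
open Matrix

/-! Summing `W = φ_{(1)} − φ + k⁻¹ I` over a window of length `n` telescopes to
`φ_{(n)} − φ + (n/k) I`. For `n = k` this is `φ_{(k)} − φ + I`, whose derivative is given by the
hypothesis; for `n = l` the scalar parts `(l/k) I` on both sides of the commutator-like right-hand
side are central and cancel. -/

theorem sum_range_add_eq_sub_add_nsmul {M : Type*} [AddCommGroup M] (f W : ℤ → M) (c : M)
    (hW : ∀ j, W j = f (j + 1) - f j + c) (x : ℤ) (n : ℕ) :
    ∑ i ∈ Finset.range n, W (x + i) = f (x + n) - f x + n • c := by
  induction n with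
  | zero => simp
  | succ n ih =>
    rw [Finset.sum_range_succ, ih, hW, succ_nsmul, Nat.cast_succ, ← add_assoc x]
    abel

theorem add_mul_sub_mul_add_of_commute {R : Type*} [Ring R] {c b : R} (h : Commute c b)
    (a d : R) : (a + c) * b - b * (d + c) = a * b - b * d := by
  rw [add_mul, mul_add, h.eq]
  abel

/-- if `φ` is entrywise `t`-differentiable (derivative `φt`) and satisfies
`(φ_{(k)} − φ)_t = (φ_{(l)} − φ)(φ_{(k)} − φ + I) − (φ_{(k)} − φ + I)(φ_{(l)} − φ)_{(k−l)}`
with `k ≥ 1`, `l ≥ 1`, then `W := φ_{(1)} − φ + (1/k) I` satisfies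
`(Σ_{i=0}^{k−1} W_{(i)})_t
   = (Σ_{i=0}^{l−1} W_{(i)})(Σ_{i=0}^{k−1} W_{(i)}) − (Σ_{i=0}^{k−1} W_{(i)})(Σ_{i=k−l}^{k−1} W_{(i)})`. -/
theorem stmt_4 (m : ℕ) (k l : ℤ) (hk : 1 ≤ k) (hl : 1 ≤ l)
    (φ φt : ℝ → ℤ → Matrix (Fin m) (Fin m) ℂ)
    (hφt : ∀ t j (a b : Fin m), HasDerivAt (fun s => φ s j a b) (φt t j a b) t)
    (heq : ∀ t j,
      φt t (j + k) - φt t j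
        = (φ t (j + l) - φ t j) * (φ t (j + k) - φ t j + 1)
          - (φ t (j + k) - φ t j + 1) * (φ t (j + k) - φ t (j + (k - l))))
    (W : ℝ → ℤ → Matrix (Fin m) (Fin m) ℂ)
    (hW : ∀ t j, W t j = φ t (j + 1) - φ t j + ((k : ℂ))⁻¹ • (1 : Matrix (Fin m) (Fin m) ℂ)) :
    ∀ t j (a b : Fin m),
      HasDerivAt (fun s => (∑ i ∈ Finset.range k.toNat, W s (j + (i : ℤ))) a b)
        (((∑ i ∈ Finset.range l.toNat, W t (j + (i : ℤ)))
            * (∑ i ∈ Finset.range k.toNat, W t (j + (i : ℤ)))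
          - (∑ i ∈ Finset.range k.toNat, W t (j + (i : ℤ)))
            * (∑ i ∈ Finset.range l.toNat, W t (j + (k - l) + (i : ℤ)))) a b) t := by
  intro t j a b
  have hk0 : (k : ℂ) ≠ 0 := by exact_mod_cast (by omega : k ≠ 0)
  have hkn : (k.toNat : ℤ) = k := Int.toNat_of_nonneg (by omega)
  have hln : (l.toNat : ℤ) = l := Int.toNat_of_nonneg (by omega)
  have hsum := fun s => sum_range_add_eq_sub_add_nsmul (φ s) (W s) _ (hW s)
  have hsumk : ∀ s, ∑ i ∈ Finset.range k.toNat, W s (j + i) = φ s (j + k) - φ s j + 1 := by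
    intro s
    rw [hsum, hkn, ← Nat.cast_smul_eq_nsmul ℂ, smul_smul, show (k.toNat : ℂ) = k by
      exact_mod_cast hkn, mul_inv_cancel₀ hk0, one_smul]
  have hcomm : Commute (l.toNat • ((k : ℂ))⁻¹ • (1 : Matrix (Fin m) (Fin m) ℂ))
      (φ t (j + k) - φ t j + 1) :=
    ((Commute.one_left _).smul_left _).smul_left _
  simp only [hsumk]
  rw [hsum, hsum, hln, show j + (k - l) + l = j + k by ring, add_mul_sub_mul_add_of_commute hcomm,
    ← heq]
  simp only [Matrix.add_apply, Matrix.sub_apply]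
  exact ((hφt t _ a b).sub (hφt t _ a b)).add_const _
end

section
/- Let g₀ : ℝ × ℤ × ℤ → Mat(m×m, ℂ) be an invertible solution of the semi-discrete chiral model equation (g₀ g₀_{,1}^{-1})_t + (g₀ g₀_{,2}^{-1})_{,1,-2} − g₀ g₀_{,2}^{-1} = 0. Let P, Q be n×n matrix functions with P_t = 0, P_{,2} = P, Q_t = 0, Q_{,2} = Q, let ω̃ be an n×n matrix function (entrywise differentiable in t) with ω̃_{,2} = ω̃, and set γ₁ := ω̃ P − Q ω̃_{,1}, γ₂ := −ω̃_t. Let θ (of size m×n) and η (of size n×m) be entrywise differentiable in t and satisfy θ_{,-2} = −(θ P)_{,-1} − g₀_{,-1} g₀^{-1} θ, θ_t = g₀ g₀_{,2}^{-1} θ_{,2}, η_{,2} = −Q η_{,1} − η g₀ g₀_{,1}^{-1}, η_t = −(η g₀)_{,-2} g₀^{-1}. Let Ω̃ be an invertible n×n matrix function, entrywise differentiable in t, satisfying Ω̃_{,2} − Ω̃ = η θ, Ω̃_{,1,-2} − (I + Q) Ω̃_{,1} + Ω̃ P + (η_{,1,-2} − η) θ_{,1,-2} − γ₁ = 0, and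 Ω̃_t = −η_t θ − γ₂. Define g := (I − θ Ω̃_{,2}^{-1} η) g₀, q̃ := θ Ω̃_{,2}^{-1}, r̃ := Ω̃^{-1} η, and assume g is invertible. Then the following equations hold: (1) (g g_{,1}^{-1})_t + (g g_{,2}^{-1})_{,1,-2} − g g_{,2}^{-1} = (q̃_{,-2} γ₂ r̃)_{,2} − (q̃_{,-2} γ₂ r̃)_{,1} − (q̃ γ₁ r̃_{,1})_t; (2) q̃_{,1,-2} = −q̃ Q − g g_{,1}^{-1} q̃_{,1} − q̃ γ₁ (Ω̃_{,2}^{-1} + r̃ q̃)_{,1}; (3) q̃_t = g g_{,2}^{-1} q̃_{,2} + q̃ γ₂ (Ω̃_{,2}^{-1} + r̃ q̃)_{,2}; (4) r̃_{,2} = −P r̃_{,1} − r̃ g g_{,1}^{-1} + (Ω̃^{-1} − r̃ q̃) γ₁ r̃_{,1}; (5) r̃_t = −(r̃ g)_{,-2} g^{-1} + (Ω̃^{-1} − r̃ q̃)_{,-2} γ₂ r̃. -/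
/-!
The algebra rests on the resolvent identity `Ω̃⁻¹ − Ω̃_{,2}⁻¹ = r̃ q̃`, a consequence of
`Ω̃_{,2} − Ω̃ = η θ`; it also shows that `I − θ Ω̃_{,2}⁻¹ η` has inverse `I + θ r̃`, so that
`g⁻¹ = g₀⁻¹ (I + θ r̃)`. Eliminating `θ_{,1,−2}` from the second equation for `Ω̃` gives
`Ω̃_{,2} P = Q Ω̃_{,1} − η g₀ g₀_{,1}⁻¹ θ_{,1} + γ₁`, from which (2) and (4) follow.
For (1), put `F := q̃ η_{,2}`. Then `g g_{,1}⁻¹ + q̃ γ₁ r̃_{,1} = g₀ g₀_{,1}⁻¹ + F − F_{,1,−2}` and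
`F_t = g g_{,2}⁻¹ − g₀ g₀_{,2}⁻¹ + q̃ γ₂_{,2} r̃_{,2}`, so (1) is the seed equation plus a
telescoping derivative.
-/

open Matrix

def HasEntrywiseDerivAt {𝕜 : Type*} [RCLike 𝕜] {a b : Type*} (A : ℝ → Matrix a b 𝕜)
    (A' : Matrix a b 𝕜) (t : ℝ) : Prop :=
  ∀ i j, HasDerivAt (fun s => A s i j) (A' i j) t

namespace HasEntrywiseDerivAt

variable {𝕜 : Type*} [RCLike 𝕜] {a b c : Type*} {t : ℝ}

theorem const (C : Matrix a b 𝕜) : HasEntrywiseDerivAt (fun _ => C) 0 t :=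
  fun i j => hasDerivAt_const t (C i j)

theorem add {A B : ℝ → Matrix a b 𝕜} {A' B' : Matrix a b 𝕜}
    (hA : HasEntrywiseDerivAt A A' t) (hB : HasEntrywiseDerivAt B B' t) :
    HasEntrywiseDerivAt (fun s => A s + B s) (A' + B') t :=
  fun i j => (hA i j).add (hB i j)

theorem sub {A B : ℝ → Matrix a b 𝕜} {A' B' : Matrix a b 𝕜}
    (hA : HasEntrywiseDerivAt A A' t) (hB : HasEntrywiseDerivAt B B' t) :
    HasEntrywiseDerivAt (fun s => A s - B s) (A' - B') t :=
  fun i j => (hA i j).sub (hB i j)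

theorem mul [Fintype b] {A : ℝ → Matrix a b 𝕜} {B : ℝ → Matrix b c 𝕜} {A' B'}
    (hA : HasEntrywiseDerivAt A A' t) (hB : HasEntrywiseDerivAt B B' t) :
    HasEntrywiseDerivAt (fun s => A s * B s) (A' * B t + A t * B') t := fun i j => by
  simp only [mul_apply, Matrix.add_apply, ← Finset.sum_add_distrib]
  exact HasDerivAt.fun_sum fun k _ => (hA i k).fun_mul (hB k j)

theorem unique {A : ℝ → Matrix a b 𝕜} {A' A'' : Matrix a b 𝕜}
    (h₁ : HasEntrywiseDerivAt A A' t) (h₂ : HasEntrywiseDerivAt A A'' t) : A' = A'' :=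
  ext fun i j => (h₁ i j).unique (h₂ i j)

theorem shift_eq_of_shift_eq {A A' : ℝ → ℤ → ℤ → Matrix a b 𝕜}
    (hA : ∀ t j₁ j₂, HasEntrywiseDerivAt (fun s => A s j₁ j₂) (A' t j₁ j₂) t)
    (h : ∀ t j₁ j₂, A t j₁ (j₂ + 1) = A t j₁ j₂) (t : ℝ) (j₁ j₂ : ℤ) :
    A' t j₁ (j₂ + 1) = A' t j₁ j₂ := by
  refine (hA t j₁ (j₂ + 1)).unique ?_
  simp only [h]
  exact hA t j₁ j₂

theorem congr_of_eventuallyEq {A B : ℝ → Matrix a b 𝕜} {A' : Matrix a b 𝕜}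
    (hA : HasEntrywiseDerivAt A A' t) (h : B =ᶠ[nhds t] A) : HasEntrywiseDerivAt B A' t :=
  fun i j => (hA i j).congr_of_eventuallyEq (h.mono fun _ hs => congrFun (congrFun hs i) j)

end HasEntrywiseDerivAt

section Inverse

variable {𝕜 : Type*} [RCLike 𝕜] {n : Type*} [Fintype n] [DecidableEq n] {t : ℝ}

theorem differentiableAt_det_of_entries {M : ℝ → Matrix n n 𝕜}
    (hM : ∀ i j, DifferentiableAt ℝ (fun s => M s i j) t) :
    DifferentiableAt ℝ (fun s => (M s).det) t := by
  simp only [det_apply']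
  fun_prop

theorem differentiableAt_inv_apply_of_entries {M : ℝ → Matrix n n 𝕜}
    (hM : ∀ i j, DifferentiableAt ℝ (fun s => M s i j) t) (hu : IsUnit (M t)) (i j : n) :
    DifferentiableAt ℝ (fun s => (M s)⁻¹ i j) t := by
  have hdet : (M t).det ≠ 0 := ((isUnit_iff_isUnit_det _).mp hu).ne_zero
  simp only [inv_def, Matrix.smul_apply, adjugate_apply, Ring.inverse_eq_inv', smul_eq_mul]
  refine ((differentiableAt_det_of_entries hM).inv hdet).mul
    (differentiableAt_det_of_entries fun k l => ?_)
  by_cases hk : k = j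
  · subst hk; simp only [updateRow_self]; exact differentiableAt_const _
  · simp only [updateRow_ne hk]; exact hM k l

theorem HasEntrywiseDerivAt.inv {M : ℝ → Matrix n n 𝕜} {M' : Matrix n n 𝕜}
    (hM : HasEntrywiseDerivAt M M' t) (hu : IsUnit (M t)) :
    HasEntrywiseDerivAt (fun s => (M s)⁻¹) (-((M t)⁻¹ * M' * (M t)⁻¹)) t := by
  have hdiff : ∀ i j, DifferentiableAt ℝ (fun s => M s i j) t :=
    fun i j => (hM i j).differentiableAt
  set N' : Matrix n n 𝕜 := of fun i j => deriv (fun s => (M s)⁻¹ i j) t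
  have hN : HasEntrywiseDerivAt (fun s => (M s)⁻¹) N' t :=
    fun i j => (differentiableAt_inv_apply_of_entries hdiff hu i j).hasDerivAt
  have hunit : ∀ᶠ s in nhds t, M s * (M s)⁻¹ = 1 := by
    have hdet : ContinuousAt (fun s => (M s).det) t :=
      (differentiableAt_det_of_entries hdiff).continuousAt
    filter_upwards [hdet.eventually_ne ((isUnit_iff_isUnit_det _).mp hu).ne_zero] with s hs
    exact mul_nonsing_inv _ (isUnit_iff_ne_zero.mpr hs)
  have hzero : M' * (M t)⁻¹ + M t * N' = 0 :=
    (hM.mul hN).unique ((HasEntrywiseDerivAt.const 1).congr_of_eventuallyEq hunit)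
  convert hN using 1
  calc -((M t)⁻¹ * M' * (M t)⁻¹) = (M t)⁻¹ * (M t * N') := by
        rw [eq_neg_of_add_eq_zero_right hzero, Matrix.mul_neg, Matrix.mul_assoc]
    _ = N' := nonsing_inv_mul_cancel_left _ _ ((isUnit_iff_isUnit_det _).mp hu)

end Inverse

namespace Matrix

variable {R : Type*} [CommRing R] {a k : Type*} [Fintype a] [Fintype k] [DecidableEq k]
  {Ω Ω' : Matrix k k R} {θ : Matrix a k R} {η : Matrix k a R}

theorem inv_sub_inv_eq_inv_mul_mul_mul_inv (hΩ : IsUnit Ω) (hΩ' : IsUnit Ω')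
    (h : Ω' - Ω = η * θ) : Ω⁻¹ - Ω'⁻¹ = Ω⁻¹ * η * (θ * Ω'⁻¹) := by
  rw [inv_sub_inv (iff_of_true hΩ hΩ'), h, Matrix.mul_assoc, Matrix.mul_assoc, Matrix.mul_assoc]

theorem inv_sub_inv_eq_inv_mul_mul_mul_inv' (hΩ : IsUnit Ω) (hΩ' : IsUnit Ω')
    (h : Ω' - Ω = η * θ) : Ω⁻¹ - Ω'⁻¹ = Ω'⁻¹ * η * (θ * Ω⁻¹) := by
  rw [← neg_sub, inv_sub_inv (iff_of_true hΩ' hΩ), ← neg_sub Ω', h]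
  simp only [Matrix.mul_neg, Matrix.neg_mul, neg_neg, Matrix.mul_assoc]

theorem one_sub_mul_inv_mul_mul_one_add [DecidableEq a] (hΩ : IsUnit Ω) (hΩ' : IsUnit Ω')
    (h : Ω' - Ω = η * θ) : (1 - θ * Ω'⁻¹ * η) * (1 + θ * Ω⁻¹ * η) = 1 := by
  calc (1 - θ * Ω'⁻¹ * η) * (1 + θ * Ω⁻¹ * η)
      = 1 + θ * (Ω⁻¹ - Ω'⁻¹ - Ω'⁻¹ * η * (θ * Ω⁻¹)) * η := by
        simp only [Matrix.sub_mul, Matrix.mul_add, Matrix.mul_sub,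
          Matrix.one_mul, Matrix.mul_one, Matrix.mul_assoc]
        abel
    _ = 1 := by rw [inv_sub_inv_eq_inv_mul_mul_mul_inv' hΩ hΩ' h, sub_self, Matrix.mul_zero,
        Matrix.zero_mul, add_zero]

theorem inv_one_sub_mul_inv_mul [DecidableEq a] (hΩ : IsUnit Ω) (hΩ' : IsUnit Ω')
    (h : Ω' - Ω = η * θ) : (1 - θ * Ω'⁻¹ * η)⁻¹ = 1 + θ * Ω⁻¹ * η :=
  inv_eq_right_inv (one_sub_mul_inv_mul_mul_one_add hΩ hΩ' h)

theorem one_add_mul_inv_mul_mul_mul_inv [DecidableEq a] (hΩ : IsUnit Ω) (hΩ' : IsUnit Ω')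
    (h : Ω' - Ω = η * θ) : (1 + θ * Ω⁻¹ * η) * (θ * Ω'⁻¹) = θ * Ω⁻¹ :=
  calc (1 + θ * Ω⁻¹ * η) * (θ * Ω'⁻¹) = θ * (Ω'⁻¹ + Ω⁻¹ * η * (θ * Ω'⁻¹)) := by
        simp only [Matrix.add_mul, Matrix.mul_add, Matrix.one_mul, Matrix.mul_assoc]
    _ = θ * Ω⁻¹ := by rw [← inv_sub_inv_eq_inv_mul_mul_mul_inv hΩ hΩ' h, add_sub_cancel]

theorem inv_mul_mul_one_sub_mul_inv_mul [DecidableEq a] (hΩ : IsUnit Ω) (hΩ' : IsUnit Ω')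
    (h : Ω' - Ω = η * θ) : Ω⁻¹ * η * (1 - θ * Ω'⁻¹ * η) = Ω'⁻¹ * η :=
  calc Ω⁻¹ * η * (1 - θ * Ω'⁻¹ * η) = (Ω⁻¹ - Ω⁻¹ * η * (θ * Ω'⁻¹)) * η := by
        simp only [Matrix.mul_sub, Matrix.sub_mul, Matrix.mul_one, Matrix.mul_assoc]
    _ = Ω'⁻¹ * η := by rw [← inv_sub_inv_eq_inv_mul_mul_mul_inv hΩ hΩ' h, sub_sub_cancel]

end Matrix

namespace SemiDiscreteChiral

section Lattice

variable {R : Type*} [CommRing R] {a k : Type*} [Fintype a] [Fintype k]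
  [DecidableEq k] {g₀ g : ℤ → ℤ → Matrix a a R} {P Q γ₁ Ω : ℤ → ℤ → Matrix k k R}
  {θ q : ℤ → ℤ → Matrix a k R} {η r : ℤ → ℤ → Matrix k a R}

theorem P_eq_inv_mul [DecidableEq a] (hΩ : ∀ j₁ j₂, IsUnit (Ω j₁ j₂))
    (hΩ₂ : ∀ j₁ j₂, Ω j₁ (j₂ + 1) - Ω j₁ j₂ = η j₁ j₂ * θ j₁ j₂)
    (hsyl : ∀ j₁ j₂, Ω (j₁ + 1) (j₂ - 1) - (1 + Q j₁ j₂) * Ω (j₁ + 1) j₂ + Ω j₁ j₂ * P j₁ j₂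
        + (η (j₁ + 1) (j₂ - 1) - η j₁ j₂) * θ (j₁ + 1) (j₂ - 1) - γ₁ j₁ j₂ = 0)
    (hθ : ∀ j₁ j₂, θ j₁ (j₂ - 1)
      = -(θ (j₁ - 1) j₂ * P (j₁ - 1) j₂) - g₀ (j₁ - 1) j₂ * (g₀ j₁ j₂)⁻¹ * θ j₁ j₂)
    (j₁ j₂ : ℤ) :
    P j₁ j₂ = (Ω j₁ (j₂ + 1))⁻¹ * (Q j₁ j₂ * Ω (j₁ + 1) j₂
      - η j₁ j₂ * (g₀ j₁ j₂ * (g₀ (j₁ + 1) j₂)⁻¹) * θ (j₁ + 1) j₂ + γ₁ j₁ j₂) := by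
  have hΩ' : Ω (j₁ + 1) (j₂ - 1)
      = Ω (j₁ + 1) j₂ - η (j₁ + 1) (j₂ - 1) * θ (j₁ + 1) (j₂ - 1) := by
    rw [← hΩ₂, sub_add_cancel, sub_sub_cancel]
  have hθ' := hθ (j₁ + 1) j₂
  rw [add_sub_cancel_right] at hθ'
  have hsyl' := hsyl j₁ j₂
  rw [hΩ', hθ'] at hsyl'
  have hΩP : Ω j₁ (j₂ + 1) * P j₁ j₂ = Q j₁ j₂ * Ω (j₁ + 1) j₂
      - η j₁ j₂ * (g₀ j₁ j₂ * (g₀ (j₁ + 1) j₂)⁻¹) * θ (j₁ + 1) j₂ + γ₁ j₁ j₂ := by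
    rw [eq_add_of_sub_eq' (hΩ₂ j₁ j₂), ← sub_eq_zero, ← hsyl']
    simp only [Matrix.add_mul, Matrix.sub_mul, Matrix.mul_sub, Matrix.mul_neg, Matrix.one_mul,
      Matrix.mul_assoc]
    abel
  rw [← hΩP, nonsing_inv_mul_cancel_left _ _ ((isUnit_iff_isUnit_det _).mp (hΩ _ _))]

section Darboux

variable (hΩ : ∀ j₁ j₂, IsUnit (Ω j₁ j₂))
    (hΩ₂ : ∀ j₁ j₂, Ω j₁ (j₂ + 1) - Ω j₁ j₂ = η j₁ j₂ * θ j₁ j₂)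
    (hr : ∀ j₁ j₂, r j₁ j₂ = (Ω j₁ j₂)⁻¹ * η j₁ j₂)
include hΩ hΩ₂ hr

theorem g_inv_eq [DecidableEq a]
    (hg : ∀ j₁ j₂, g j₁ j₂ = (1 - θ j₁ j₂ * (Ω j₁ (j₂ + 1))⁻¹ * η j₁ j₂) * g₀ j₁ j₂)
    (j₁ j₂ : ℤ) : (g j₁ j₂)⁻¹ = (g₀ j₁ j₂)⁻¹ * (1 + θ j₁ j₂ * r j₁ j₂) := by
  rw [hg, Matrix.mul_inv_rev, inv_one_sub_mul_inv_mul (hΩ _ _) (hΩ _ _) (hΩ₂ _ _), hr,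
    Matrix.mul_assoc]

variable (hq : ∀ j₁ j₂, q j₁ j₂ = θ j₁ j₂ * (Ω j₁ (j₂ + 1))⁻¹)
include hq

theorem inv_sub_r_mul_q (j₁ j₂ : ℤ) :
    (Ω j₁ j₂)⁻¹ - r j₁ j₂ * q j₁ j₂ = (Ω j₁ (j₂ + 1))⁻¹ := by
  rw [hr, hq, ← inv_sub_inv_eq_inv_mul_mul_mul_inv (hΩ _ _) (hΩ _ _) (hΩ₂ _ _), sub_sub_cancel]

variable [DecidableEq a]

theorem one_add_θ_mul_r_mul_q (j₁ j₂ : ℤ) :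
    (1 + θ j₁ j₂ * r j₁ j₂) * q j₁ j₂ = θ j₁ j₂ * (Ω j₁ j₂)⁻¹ := by
  rw [hr, hq, ← Matrix.mul_assoc (θ j₁ j₂) (Ω j₁ j₂)⁻¹,
    one_add_mul_inv_mul_mul_mul_inv (hΩ _ _) (hΩ _ _) (hΩ₂ _ _)]

theorem r_mul_one_sub_q_mul_η (j₁ j₂ : ℤ) :
    r j₁ j₂ * (1 - q j₁ j₂ * η j₁ j₂) = (Ω j₁ (j₂ + 1))⁻¹ * η j₁ j₂ := by
  rw [hr, hq, inv_mul_mul_one_sub_mul_inv_mul (hΩ _ _) (hΩ _ _) (hΩ₂ _ _)]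

variable (hg : ∀ j₁ j₂, g j₁ j₂ = (1 - θ j₁ j₂ * (Ω j₁ (j₂ + 1))⁻¹ * η j₁ j₂) * g₀ j₁ j₂)
    (hsyl : ∀ j₁ j₂, Ω (j₁ + 1) (j₂ - 1) - (1 + Q j₁ j₂) * Ω (j₁ + 1) j₂ + Ω j₁ j₂ * P j₁ j₂
        + (η (j₁ + 1) (j₂ - 1) - η j₁ j₂) * θ (j₁ + 1) (j₂ - 1) - γ₁ j₁ j₂ = 0)
    (hθ : ∀ j₁ j₂, θ j₁ (j₂ - 1)
      = -(θ (j₁ - 1) j₂ * P (j₁ - 1) j₂) - g₀ (j₁ - 1) j₂ * (g₀ j₁ j₂)⁻¹ * θ j₁ j₂)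
include hg hsyl hθ

theorem q_shift_eq (j₁ j₂ : ℤ) :
    q (j₁ + 1) (j₂ - 1)
      = -(q j₁ j₂ * Q j₁ j₂) - g j₁ j₂ * (g (j₁ + 1) j₂)⁻¹ * q (j₁ + 1) j₂
        - q j₁ j₂ * γ₁ j₁ j₂ * ((Ω (j₁ + 1) (j₂ + 1))⁻¹ + r (j₁ + 1) j₂ * q (j₁ + 1) j₂) := by
  have hΩ₁ := (isUnit_iff_isUnit_det _).mp (hΩ (j₁ + 1) j₂)
  have hθ' := hθ (j₁ + 1) j₂
  rw [add_sub_cancel_right] at hθ'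
  have hggq : g j₁ j₂ * (g (j₁ + 1) j₂)⁻¹ * q (j₁ + 1) j₂ = (1 - q j₁ j₂ * η j₁ j₂)
      * (g₀ j₁ j₂ * (g₀ (j₁ + 1) j₂)⁻¹) * θ (j₁ + 1) j₂ * (Ω (j₁ + 1) j₂)⁻¹ := by
    rw [hg, ← hq, g_inv_eq hΩ hΩ₂ hr hg]
    simp only [Matrix.mul_assoc]
    rw [one_add_θ_mul_r_mul_q hΩ hΩ₂ hr hq]
  rw [hggq, ← inv_sub_r_mul_q hΩ hΩ₂ hr hq (j₁ + 1) j₂, sub_add_cancel, hq (j₁ + 1),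
    sub_add_cancel, hθ', P_eq_inv_mul hΩ hΩ₂ hsyl hθ, ← Matrix.mul_assoc (θ j₁ j₂), ← hq]
  simp only [Matrix.add_mul, Matrix.mul_add, Matrix.sub_mul, Matrix.mul_sub, Matrix.neg_mul,
    Matrix.one_mul, Matrix.mul_assoc, mul_nonsing_inv _ hΩ₁, Matrix.mul_one]
  abel

variable (hη : ∀ j₁ j₂, η j₁ (j₂ + 1)
      = -(Q j₁ j₂ * η (j₁ + 1) j₂) - η j₁ j₂ * (g₀ j₁ j₂ * (g₀ (j₁ + 1) j₂)⁻¹))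
include hη

theorem r_shift_eq (j₁ j₂ : ℤ) :
    r j₁ (j₂ + 1)
      = -(P j₁ j₂ * r (j₁ + 1) j₂) - r j₁ j₂ * (g j₁ j₂ * (g (j₁ + 1) j₂)⁻¹)
        + ((Ω j₁ j₂)⁻¹ - r j₁ j₂ * q j₁ j₂) * γ₁ j₁ j₂ * r (j₁ + 1) j₂ := by
  have hΩ₁ := (isUnit_iff_isUnit_det _).mp (hΩ (j₁ + 1) j₂)
  have hrgg : r j₁ j₂ * (g j₁ j₂ * (g (j₁ + 1) j₂)⁻¹) = (Ω j₁ (j₂ + 1))⁻¹ * η j₁ j₂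
      * (g₀ j₁ j₂ * (g₀ (j₁ + 1) j₂)⁻¹) * (1 + θ (j₁ + 1) j₂ * r (j₁ + 1) j₂) := by
    rw [hg, ← hq, g_inv_eq hΩ hΩ₂ hr hg]
    simp only [← Matrix.mul_assoc]
    rw [r_mul_one_sub_q_mul_η hΩ hΩ₂ hr hq]
  rw [hrgg, inv_sub_r_mul_q hΩ hΩ₂ hr hq, hr j₁ (j₂ + 1), hη, P_eq_inv_mul hΩ hΩ₂ hsyl hθ,
    hr (j₁ + 1) j₂]
  simp only [Matrix.add_mul, Matrix.mul_add, Matrix.sub_mul, Matrix.mul_sub,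
    Matrix.mul_neg, Matrix.mul_one, Matrix.mul_assoc,
    mul_nonsing_inv_cancel_left _ _ hΩ₁]
  abel

theorem g_mul_inv_g_add_q_mul_γ₁_mul_r (j₁ j₂ : ℤ) :
    g j₁ j₂ * (g (j₁ + 1) j₂)⁻¹ + q j₁ j₂ * γ₁ j₁ j₂ * r (j₁ + 1) j₂
      = g₀ j₁ j₂ * (g₀ (j₁ + 1) j₂)⁻¹ + q j₁ j₂ * η j₁ (j₂ + 1)
        - q (j₁ + 1) (j₂ - 1) * η (j₁ + 1) j₂ := by
  have hΩ₁ := (isUnit_iff_isUnit_det _).mp (hΩ (j₁ + 1) j₂)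
  have hθ' := hθ (j₁ + 1) j₂
  rw [add_sub_cancel_right] at hθ'
  rw [hg, ← hq, g_inv_eq hΩ hΩ₂ hr hg, hη, hq (j₁ + 1) (j₂ - 1), sub_add_cancel, hθ',
    P_eq_inv_mul hΩ hΩ₂ hsyl hθ, ← Matrix.mul_assoc (θ j₁ j₂), ← hq, hr (j₁ + 1) j₂]
  simp only [Matrix.add_mul, Matrix.mul_add, Matrix.sub_mul, Matrix.mul_sub, Matrix.neg_mul,
    Matrix.mul_neg, Matrix.one_mul, Matrix.mul_one, Matrix.mul_assoc,
    mul_nonsing_inv_cancel_left _ _ hΩ₁]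
  abel

end Darboux

end Lattice

section Time

variable {𝕜 : Type*} [RCLike 𝕜] {a k : Type*} [Fintype a] [DecidableEq a] [Fintype k]
  [DecidableEq k] {g₀ g : ℝ → ℤ → ℤ → Matrix a a 𝕜} {γ₂ Ω Ωt : ℝ → ℤ → ℤ → Matrix k k 𝕜}
  {θ θt q : ℝ → ℤ → ℤ → Matrix a k 𝕜} {η ηt r : ℝ → ℤ → ℤ → Matrix k a 𝕜}

variable (hΩ : ∀ t j₁ j₂, IsUnit (Ω t j₁ j₂))
    (hΩt : ∀ t j₁ j₂, HasEntrywiseDerivAt (fun s => Ω s j₁ j₂) (Ωt t j₁ j₂) t)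
    (hΩt_eq : ∀ t j₁ j₂, Ωt t j₁ j₂ = -(ηt t j₁ j₂ * θ t j₁ j₂) - γ₂ t j₁ j₂)
    (hηt_eq : ∀ t j₁ j₂, ηt t j₁ j₂ = -((η t j₁ (j₂ - 1) * g₀ t j₁ (j₂ - 1)) * (g₀ t j₁ j₂)⁻¹))
include hΩ hΩt hΩt_eq hηt_eq

theorem q_hasEntrywiseDerivAt_seed
    (hθt : ∀ t j₁ j₂, HasEntrywiseDerivAt (fun s => θ s j₁ j₂) (θt t j₁ j₂) t)
    (hθt_eq : ∀ t j₁ j₂, θt t j₁ j₂ = g₀ t j₁ j₂ * (g₀ t j₁ (j₂ + 1))⁻¹ * θ t j₁ (j₂ + 1))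
    (hq : ∀ t j₁ j₂, q t j₁ j₂ = θ t j₁ j₂ * (Ω t j₁ (j₂ + 1))⁻¹) (t : ℝ) (j₁ j₂ : ℤ) :
    HasEntrywiseDerivAt (fun s => q s j₁ j₂)
      ((1 - q t j₁ j₂ * η t j₁ j₂) * (g₀ t j₁ j₂ * (g₀ t j₁ (j₂ + 1))⁻¹) * θ t j₁ (j₂ + 1)
          * (Ω t j₁ (j₂ + 1))⁻¹
        + q t j₁ j₂ * γ₂ t j₁ (j₂ + 1) * (Ω t j₁ (j₂ + 1))⁻¹) t := by
  rw [show (fun s => q s j₁ j₂) = fun s => θ s j₁ j₂ * (Ω s j₁ (j₂ + 1))⁻¹ from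
    funext fun s => hq s j₁ j₂]
  convert (hθt t j₁ j₂).mul ((hΩt t j₁ (j₂ + 1)).inv (hΩ t j₁ (j₂ + 1))) using 1
  rw [hΩt_eq, hηt_eq, add_sub_cancel_right, hθt_eq, hq]
  simp only [Matrix.sub_mul, Matrix.mul_sub, Matrix.neg_mul,
    Matrix.mul_neg, neg_neg, Matrix.one_mul, Matrix.mul_assoc]
  abel

variable (hΩ₂ : ∀ t j₁ j₂, Ω t j₁ (j₂ + 1) - Ω t j₁ j₂ = η t j₁ j₂ * θ t j₁ j₂)
    (hq : ∀ t j₁ j₂, q t j₁ j₂ = θ t j₁ j₂ * (Ω t j₁ (j₂ + 1))⁻¹)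
    (hr : ∀ t j₁ j₂, r t j₁ j₂ = (Ω t j₁ j₂)⁻¹ * η t j₁ j₂)
    (hg : ∀ t j₁ j₂, g t j₁ j₂ = (1 - θ t j₁ j₂ * (Ω t j₁ (j₂ + 1))⁻¹ * η t j₁ j₂) * g₀ t j₁ j₂)
include hΩ₂ hq hr hg

theorem r_hasEntrywiseDerivAt
    (hηt : ∀ t j₁ j₂, HasEntrywiseDerivAt (fun s => η s j₁ j₂) (ηt t j₁ j₂) t)
    (t : ℝ) (j₁ j₂ : ℤ) :
    HasEntrywiseDerivAt (fun s => r s j₁ j₂)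
      (-((r t j₁ (j₂ - 1) * g t j₁ (j₂ - 1)) * (g t j₁ j₂)⁻¹)
        + ((Ω t j₁ (j₂ - 1))⁻¹ - r t j₁ (j₂ - 1) * q t j₁ (j₂ - 1)) * γ₂ t j₁ j₂ * r t j₁ j₂) t := by
  have hrg : r t j₁ (j₂ - 1) * g t j₁ (j₂ - 1)
      = (Ω t j₁ j₂)⁻¹ * η t j₁ (j₂ - 1) * g₀ t j₁ (j₂ - 1) := by
    rw [hg, ← hq, ← Matrix.mul_assoc, r_mul_one_sub_q_mul_η (hΩ t) (hΩ₂ t) (hr t) (hq t),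
      sub_add_cancel]
  rw [show (fun s => r s j₁ j₂) = fun s => (Ω s j₁ j₂)⁻¹ * η s j₁ j₂ from
    funext fun s => hr s j₁ j₂]
  convert ((hΩt t j₁ j₂).inv (hΩ t j₁ j₂)).mul (hηt t j₁ j₂) using 1
  rw [hrg, inv_sub_r_mul_q (hΩ t) (hΩ₂ t) (hr t) (hq t), sub_add_cancel,
    g_inv_eq (hΩ t) (hΩ₂ t) (hr t) (hg t), hΩt_eq, hηt_eq, hr t j₁ j₂]
  simp only [Matrix.mul_add, Matrix.sub_mul, Matrix.mul_sub, Matrix.neg_mul,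
    Matrix.mul_neg, neg_neg, Matrix.mul_one, Matrix.mul_assoc]
  abel

variable (hθt : ∀ t j₁ j₂, HasEntrywiseDerivAt (fun s => θ s j₁ j₂) (θt t j₁ j₂) t)
    (hθt_eq : ∀ t j₁ j₂, θt t j₁ j₂ = g₀ t j₁ j₂ * (g₀ t j₁ (j₂ + 1))⁻¹ * θ t j₁ (j₂ + 1))
include hθt hθt_eq

theorem q_hasEntrywiseDerivAt (hγ₂ : ∀ t j₁ j₂, γ₂ t j₁ (j₂ + 1) = γ₂ t j₁ j₂)
    (t : ℝ) (j₁ j₂ : ℤ) :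
    HasEntrywiseDerivAt (fun s => q s j₁ j₂)
      (g t j₁ j₂ * (g t j₁ (j₂ + 1))⁻¹ * q t j₁ (j₂ + 1)
        + q t j₁ j₂ * γ₂ t j₁ j₂
          * ((Ω t j₁ (j₂ + 1 + 1))⁻¹ + r t j₁ (j₂ + 1) * q t j₁ (j₂ + 1))) t := by
  convert q_hasEntrywiseDerivAt_seed hΩ hΩt hΩt_eq hηt_eq hθt hθt_eq hq t j₁ j₂ using 1
  rw [← inv_sub_r_mul_q (hΩ t) (hΩ₂ t) (hr t) (hq t) j₁ (j₂ + 1), sub_add_cancel, hg, ← hq,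
    g_inv_eq (hΩ t) (hΩ₂ t) (hr t) (hg t), hγ₂]
  simp only [Matrix.mul_assoc]
  rw [one_add_θ_mul_r_mul_q (hΩ t) (hΩ₂ t) (hr t) (hq t)]

theorem q_mul_η_hasEntrywiseDerivAt
    (hηt : ∀ t j₁ j₂, HasEntrywiseDerivAt (fun s => η s j₁ j₂) (ηt t j₁ j₂) t)
    (t : ℝ) (j₁ j₂ : ℤ) :
    HasEntrywiseDerivAt (fun s => q s j₁ j₂ * η s j₁ (j₂ + 1))
      (g t j₁ j₂ * (g t j₁ (j₂ + 1))⁻¹ - g₀ t j₁ j₂ * (g₀ t j₁ (j₂ + 1))⁻¹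
        + q t j₁ j₂ * γ₂ t j₁ (j₂ + 1) * r t j₁ (j₂ + 1)) t := by
  convert (q_hasEntrywiseDerivAt_seed hΩ hΩt hΩt_eq hηt_eq hθt hθt_eq hq t j₁ j₂).mul
    (hηt t j₁ (j₂ + 1)) using 1
  rw [hηt_eq, add_sub_cancel_right, hg, ← hq, g_inv_eq (hΩ t) (hΩ₂ t) (hr t) (hg t),
    hr t j₁ (j₂ + 1)]
  simp only [Matrix.add_mul, Matrix.mul_add, Matrix.sub_mul,
    Matrix.mul_neg, Matrix.one_mul, Matrix.mul_one, Matrix.mul_assoc]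
  abel

end Time

end SemiDiscreteChiral

open SemiDiscreteChiral

theorem stmt_5_general (m n : ℕ)
    (g₀ : ℝ → ℤ → ℤ → Matrix (Fin m) (Fin m) ℂ)
    (hseed : ∀ t j₁ j₂ (a b : Fin m),
      HasDerivAt (fun s => (g₀ s j₁ j₂ * (g₀ s (j₁ + 1) j₂)⁻¹) a b)
        ((g₀ t j₁ j₂ * (g₀ t j₁ (j₂ + 1))⁻¹
          - g₀ t (j₁ + 1) (j₂ - 1) * (g₀ t (j₁ + 1) j₂)⁻¹) a b) t)
    (P Q : ℝ → ℤ → ℤ → Matrix (Fin n) (Fin n) ℂ)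
    (om omt : ℝ → ℤ → ℤ → Matrix (Fin n) (Fin n) ℂ)
    (homt : ∀ t j₁ j₂ (a b : Fin n), HasDerivAt (fun s => om s j₁ j₂ a b) (omt t j₁ j₂ a b) t)
    (hom2 : ∀ t j₁ j₂, om t j₁ (j₂ + 1) = om t j₁ j₂)
    (γ₁ γ₂ : ℝ → ℤ → ℤ → Matrix (Fin n) (Fin n) ℂ)
    (hγ₂ : ∀ t j₁ j₂, γ₂ t j₁ j₂ = -omt t j₁ j₂)
    (θ θt : ℝ → ℤ → ℤ → Matrix (Fin m) (Fin n) ℂ)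
    (hθt : ∀ t j₁ j₂ (a : Fin m) (b : Fin n),
      HasDerivAt (fun s => θ s j₁ j₂ a b) (θt t j₁ j₂ a b) t)
    (hθ1 : ∀ t j₁ j₂, θ t j₁ (j₂ - 1)
      = -(θ t (j₁ - 1) j₂ * P t (j₁ - 1) j₂) - g₀ t (j₁ - 1) j₂ * (g₀ t j₁ j₂)⁻¹ * θ t j₁ j₂)
    (hθ2 : ∀ t j₁ j₂, θt t j₁ j₂ = g₀ t j₁ j₂ * (g₀ t j₁ (j₂ + 1))⁻¹ * θ t j₁ (j₂ + 1))
    (η ηt : ℝ → ℤ → ℤ → Matrix (Fin n) (Fin m) ℂ)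
    (hηt : ∀ t j₁ j₂ (a : Fin n) (b : Fin m),
      HasDerivAt (fun s => η s j₁ j₂ a b) (ηt t j₁ j₂ a b) t)
    (hη1 : ∀ t j₁ j₂, η t j₁ (j₂ + 1)
      = -(Q t j₁ j₂ * η t (j₁ + 1) j₂) - η t j₁ j₂ * (g₀ t j₁ j₂ * (g₀ t (j₁ + 1) j₂)⁻¹))
    (hη2 : ∀ t j₁ j₂, ηt t j₁ j₂ = -((η t j₁ (j₂ - 1) * g₀ t j₁ (j₂ - 1)) * (g₀ t j₁ j₂)⁻¹))
    (Om Omt : ℝ → ℤ → ℤ → Matrix (Fin n) (Fin n) ℂ)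
    (hOminv : ∀ t j₁ j₂, IsUnit (Om t j₁ j₂))
    (hOmt : ∀ t j₁ j₂ (a b : Fin n), HasDerivAt (fun s => Om s j₁ j₂ a b) (Omt t j₁ j₂ a b) t)
    (hOm1 : ∀ t j₁ j₂, Om t j₁ (j₂ + 1) - Om t j₁ j₂ = η t j₁ j₂ * θ t j₁ j₂)
    (hOm2 : ∀ t j₁ j₂, Om t (j₁ + 1) (j₂ - 1) - (1 + Q t j₁ j₂) * Om t (j₁ + 1) j₂
        + Om t j₁ j₂ * P t j₁ j₂
        + (η t (j₁ + 1) (j₂ - 1) - η t j₁ j₂) * θ t (j₁ + 1) (j₂ - 1) - γ₁ t j₁ j₂ = 0)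
    (hOm3 : ∀ t j₁ j₂, Omt t j₁ j₂ = -(ηt t j₁ j₂ * θ t j₁ j₂) - γ₂ t j₁ j₂)
    (g : ℝ → ℤ → ℤ → Matrix (Fin m) (Fin m) ℂ)
    (qq : ℝ → ℤ → ℤ → Matrix (Fin m) (Fin n) ℂ)
    (rr : ℝ → ℤ → ℤ → Matrix (Fin n) (Fin m) ℂ)
    (hg : ∀ t j₁ j₂, g t j₁ j₂
      = (1 - θ t j₁ j₂ * (Om t j₁ (j₂ + 1))⁻¹ * η t j₁ j₂) * g₀ t j₁ j₂)
    (hqq : ∀ t j₁ j₂, qq t j₁ j₂ = θ t j₁ j₂ * (Om t j₁ (j₂ + 1))⁻¹)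
    (hrr : ∀ t j₁ j₂, rr t j₁ j₂ = (Om t j₁ j₂)⁻¹ * η t j₁ j₂) :
    -- (1)  (g g_{,1}⁻¹)_t + (g g_{,2}⁻¹)_{,1,-2} − g g_{,2}⁻¹
    --        = (q̃_{,-2} γ₂ r̃)_{,2} − (q̃_{,-2} γ₂ r̃)_{,1} − (q̃ γ₁ r̃_{,1})_t
    (∀ t j₁ j₂ (a b : Fin m),
      HasDerivAt
        (fun s => (g s j₁ j₂ * (g s (j₁ + 1) j₂)⁻¹
            + qq s j₁ j₂ * γ₁ s j₁ j₂ * rr s (j₁ + 1) j₂) a b)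
        ((g t j₁ j₂ * (g t j₁ (j₂ + 1))⁻¹ - g t (j₁ + 1) (j₂ - 1) * (g t (j₁ + 1) j₂)⁻¹
          + qq t j₁ j₂ * γ₂ t j₁ (j₂ + 1) * rr t j₁ (j₂ + 1)
          - qq t (j₁ + 1) (j₂ - 1) * γ₂ t (j₁ + 1) j₂ * rr t (j₁ + 1) j₂) a b) t) ∧
    -- (2)  q̃_{,1,-2} = −q̃ Q − g g_{,1}⁻¹ q̃_{,1} − q̃ γ₁ (Ω̃_{,2}⁻¹ + r̃ q̃)_{,1}
    (∀ t j₁ j₂, qq t (j₁ + 1) (j₂ - 1)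
      = -(qq t j₁ j₂ * Q t j₁ j₂) - g t j₁ j₂ * (g t (j₁ + 1) j₂)⁻¹ * qq t (j₁ + 1) j₂
        - qq t j₁ j₂ * γ₁ t j₁ j₂
          * ((Om t (j₁ + 1) (j₂ + 1))⁻¹ + rr t (j₁ + 1) j₂ * qq t (j₁ + 1) j₂)) ∧
    -- (3)  q̃_t = g g_{,2}⁻¹ q̃_{,2} + q̃ γ₂ (Ω̃_{,2}⁻¹ + r̃ q̃)_{,2}
    (∀ t j₁ j₂ (a : Fin m) (b : Fin n),
      HasDerivAt (fun s => qq s j₁ j₂ a b)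
        ((g t j₁ j₂ * (g t j₁ (j₂ + 1))⁻¹ * qq t j₁ (j₂ + 1)
          + qq t j₁ j₂ * γ₂ t j₁ j₂
            * ((Om t j₁ (j₂ + 1 + 1))⁻¹ + rr t j₁ (j₂ + 1) * qq t j₁ (j₂ + 1))) a b) t) ∧
    -- (4)  r̃_{,2} = −P r̃_{,1} − r̃ g g_{,1}⁻¹ + (Ω̃⁻¹ − r̃ q̃) γ₁ r̃_{,1}
    (∀ t j₁ j₂, rr t j₁ (j₂ + 1)
      = -(P t j₁ j₂ * rr t (j₁ + 1) j₂) - rr t j₁ j₂ * (g t j₁ j₂ * (g t (j₁ + 1) j₂)⁻¹)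
        + ((Om t j₁ j₂)⁻¹ - rr t j₁ j₂ * qq t j₁ j₂) * γ₁ t j₁ j₂ * rr t (j₁ + 1) j₂) ∧
    -- (5)  r̃_t = −(r̃ g)_{,-2} g⁻¹ + (Ω̃⁻¹ − r̃ q̃)_{,-2} γ₂ r̃
    (∀ t j₁ j₂ (a : Fin n) (b : Fin m),
      HasDerivAt (fun s => rr s j₁ j₂ a b)
        ((-((rr t j₁ (j₂ - 1) * g t j₁ (j₂ - 1)) * (g t j₁ j₂)⁻¹)
          + ((Om t j₁ (j₂ - 1))⁻¹ - rr t j₁ (j₂ - 1) * qq t j₁ (j₂ - 1))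
            * γ₂ t j₁ j₂ * rr t j₁ j₂) a b) t) := by
  have hγ₂₂ : ∀ t j₁ j₂, γ₂ t j₁ (j₂ + 1) = γ₂ t j₁ j₂ := fun t j₁ j₂ => by
    rw [hγ₂, hγ₂, HasEntrywiseDerivAt.shift_eq_of_shift_eq homt hom2]
  refine ⟨fun t j₁ j₂ => ?_,
    fun t => q_shift_eq (hOminv t) (hOm1 t) (hrr t) (hqq t) (hg t) (hOm2 t) (hθ1 t),
    q_hasEntrywiseDerivAt hOminv hOmt hOm3 hη2 hOm1 hqq hrr hg hθt hθ2 hγ₂₂,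
    fun t => r_shift_eq (hOminv t) (hOm1 t) (hrr t) (hqq t) (hg t) (hOm2 t) (hθ1 t) (hη1 t),
    r_hasEntrywiseDerivAt hOminv hOmt hOm3 hη2 hOm1 hqq hrr hg hηt⟩
  show HasEntrywiseDerivAt _ _ t
  have hF := q_mul_η_hasEntrywiseDerivAt hOminv hOmt hOm3 hη2 hOm1 hqq hrr hg hθt hθ2 hηt t
  have hF' := hF (j₁ + 1) (j₂ - 1)
  simp only [sub_add_cancel] at hF'
  rw [show (fun s => g s j₁ j₂ * (g s (j₁ + 1) j₂)⁻¹ + qq s j₁ j₂ * γ₁ s j₁ j₂ * rr s (j₁ + 1) j₂)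
      = fun s => g₀ s j₁ j₂ * (g₀ s (j₁ + 1) j₂)⁻¹ + qq s j₁ j₂ * η s j₁ (j₂ + 1)
        - qq s (j₁ + 1) (j₂ - 1) * η s (j₁ + 1) j₂ from funext fun s =>
      g_mul_inv_g_add_q_mul_γ₁_mul_r (hOminv s) (hOm1 s) (hrr s) (hqq s) (hg s) (hOm2 s) (hθ1 s)
        (hη1 s) j₁ j₂]
  convert (HasEntrywiseDerivAt.add (hseed t j₁ j₂) (hF j₁ j₂)).sub hF' using 1
  abel

/-- binary Darboux transformation / self-consistent source extension data for the
semi-discrete chiral model.  Given an invertible seed solution `g₀`, matrix data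
`P, Q, ω̃ (= om), γ₁, γ₂`, solutions `θ, η` of the associated linear systems and an invertible
solution `Ω̃ (= Om)` of the corresponding Sylvester-type equations, the transformed quantities
`g = (I − θ Ω̃_{,2}⁻¹ η) g₀`, `q̃ (= qq) = θ Ω̃_{,2}⁻¹`, `r̃ (= rr) = Ω̃⁻¹ η` satisfy the
source-extended semi-discrete chiral model equations (1)–(5). -/
theorem stmt_5 (m n : ℕ)
    (g₀ : ℝ → ℤ → ℤ → Matrix (Fin m) (Fin m) ℂ)
    (hg₀inv : ∀ t j₁ j₂, IsUnit (g₀ t j₁ j₂))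
    (hg₀diff : ∀ t j₁ j₂ (a b : Fin m), DifferentiableAt ℝ (fun s => g₀ s j₁ j₂ a b) t)
    (hseed : ∀ t j₁ j₂ (a b : Fin m),
      HasDerivAt (fun s => (g₀ s j₁ j₂ * (g₀ s (j₁ + 1) j₂)⁻¹) a b)
        ((g₀ t j₁ j₂ * (g₀ t j₁ (j₂ + 1))⁻¹
          - g₀ t (j₁ + 1) (j₂ - 1) * (g₀ t (j₁ + 1) j₂)⁻¹) a b) t)
    (P Q : ℝ → ℤ → ℤ → Matrix (Fin n) (Fin n) ℂ)
    (hPt : ∀ t j₁ j₂ (a b : Fin n), HasDerivAt (fun s => P s j₁ j₂ a b) 0 t)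
    (hP2 : ∀ t j₁ j₂, P t j₁ (j₂ + 1) = P t j₁ j₂)
    (hQt : ∀ t j₁ j₂ (a b : Fin n), HasDerivAt (fun s => Q s j₁ j₂ a b) 0 t)
    (hQ2 : ∀ t j₁ j₂, Q t j₁ (j₂ + 1) = Q t j₁ j₂)
    (om omt : ℝ → ℤ → ℤ → Matrix (Fin n) (Fin n) ℂ)
    (homt : ∀ t j₁ j₂ (a b : Fin n), HasDerivAt (fun s => om s j₁ j₂ a b) (omt t j₁ j₂ a b) t)
    (hom2 : ∀ t j₁ j₂, om t j₁ (j₂ + 1) = om t j₁ j₂)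
    (γ₁ γ₂ : ℝ → ℤ → ℤ → Matrix (Fin n) (Fin n) ℂ)
    (hγ₁ : ∀ t j₁ j₂, γ₁ t j₁ j₂ = om t j₁ j₂ * P t j₁ j₂ - Q t j₁ j₂ * om t (j₁ + 1) j₂)
    (hγ₂ : ∀ t j₁ j₂, γ₂ t j₁ j₂ = -omt t j₁ j₂)
    (θ θt : ℝ → ℤ → ℤ → Matrix (Fin m) (Fin n) ℂ)
    (hθt : ∀ t j₁ j₂ (a : Fin m) (b : Fin n),
      HasDerivAt (fun s => θ s j₁ j₂ a b) (θt t j₁ j₂ a b) t)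
    (hθ1 : ∀ t j₁ j₂, θ t j₁ (j₂ - 1)
      = -(θ t (j₁ - 1) j₂ * P t (j₁ - 1) j₂) - g₀ t (j₁ - 1) j₂ * (g₀ t j₁ j₂)⁻¹ * θ t j₁ j₂)
    (hθ2 : ∀ t j₁ j₂, θt t j₁ j₂ = g₀ t j₁ j₂ * (g₀ t j₁ (j₂ + 1))⁻¹ * θ t j₁ (j₂ + 1))
    (η ηt : ℝ → ℤ → ℤ → Matrix (Fin n) (Fin m) ℂ)
    (hηt : ∀ t j₁ j₂ (a : Fin n) (b : Fin m),
      HasDerivAt (fun s => η s j₁ j₂ a b) (ηt t j₁ j₂ a b) t)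
    (hη1 : ∀ t j₁ j₂, η t j₁ (j₂ + 1)
      = -(Q t j₁ j₂ * η t (j₁ + 1) j₂) - η t j₁ j₂ * (g₀ t j₁ j₂ * (g₀ t (j₁ + 1) j₂)⁻¹))
    (hη2 : ∀ t j₁ j₂, ηt t j₁ j₂ = -((η t j₁ (j₂ - 1) * g₀ t j₁ (j₂ - 1)) * (g₀ t j₁ j₂)⁻¹))
    (Om Omt : ℝ → ℤ → ℤ → Matrix (Fin n) (Fin n) ℂ)
    (hOminv : ∀ t j₁ j₂, IsUnit (Om t j₁ j₂))
    (hOmt : ∀ t j₁ j₂ (a b : Fin n), HasDerivAt (fun s => Om s j₁ j₂ a b) (Omt t j₁ j₂ a b) t)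
    (hOm1 : ∀ t j₁ j₂, Om t j₁ (j₂ + 1) - Om t j₁ j₂ = η t j₁ j₂ * θ t j₁ j₂)
    (hOm2 : ∀ t j₁ j₂, Om t (j₁ + 1) (j₂ - 1) - (1 + Q t j₁ j₂) * Om t (j₁ + 1) j₂
        + Om t j₁ j₂ * P t j₁ j₂
        + (η t (j₁ + 1) (j₂ - 1) - η t j₁ j₂) * θ t (j₁ + 1) (j₂ - 1) - γ₁ t j₁ j₂ = 0)
    (hOm3 : ∀ t j₁ j₂, Omt t j₁ j₂ = -(ηt t j₁ j₂ * θ t j₁ j₂) - γ₂ t j₁ j₂)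
    (g : ℝ → ℤ → ℤ → Matrix (Fin m) (Fin m) ℂ)
    (qq : ℝ → ℤ → ℤ → Matrix (Fin m) (Fin n) ℂ)
    (rr : ℝ → ℤ → ℤ → Matrix (Fin n) (Fin m) ℂ)
    (hg : ∀ t j₁ j₂, g t j₁ j₂
      = (1 - θ t j₁ j₂ * (Om t j₁ (j₂ + 1))⁻¹ * η t j₁ j₂) * g₀ t j₁ j₂)
    (hqq : ∀ t j₁ j₂, qq t j₁ j₂ = θ t j₁ j₂ * (Om t j₁ (j₂ + 1))⁻¹)
    (hrr : ∀ t j₁ j₂, rr t j₁ j₂ = (Om t j₁ j₂)⁻¹ * η t j₁ j₂)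
    (hginv : ∀ t j₁ j₂, IsUnit (g t j₁ j₂)) :
    -- (1)  (g g_{,1}⁻¹)_t + (g g_{,2}⁻¹)_{,1,-2} − g g_{,2}⁻¹
    --        = (q̃_{,-2} γ₂ r̃)_{,2} − (q̃_{,-2} γ₂ r̃)_{,1} − (q̃ γ₁ r̃_{,1})_t
    (∀ t j₁ j₂ (a b : Fin m),
      HasDerivAt
        (fun s => (g s j₁ j₂ * (g s (j₁ + 1) j₂)⁻¹
            + qq s j₁ j₂ * γ₁ s j₁ j₂ * rr s (j₁ + 1) j₂) a b)
        ((g t j₁ j₂ * (g t j₁ (j₂ + 1))⁻¹ - g t (j₁ + 1) (j₂ - 1) * (g t (j₁ + 1) j₂)⁻¹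
          + qq t j₁ j₂ * γ₂ t j₁ (j₂ + 1) * rr t j₁ (j₂ + 1)
          - qq t (j₁ + 1) (j₂ - 1) * γ₂ t (j₁ + 1) j₂ * rr t (j₁ + 1) j₂) a b) t) ∧
    -- (2)  q̃_{,1,-2} = −q̃ Q − g g_{,1}⁻¹ q̃_{,1} − q̃ γ₁ (Ω̃_{,2}⁻¹ + r̃ q̃)_{,1}
    (∀ t j₁ j₂, qq t (j₁ + 1) (j₂ - 1)
      = -(qq t j₁ j₂ * Q t j₁ j₂) - g t j₁ j₂ * (g t (j₁ + 1) j₂)⁻¹ * qq t (j₁ + 1) j₂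
        - qq t j₁ j₂ * γ₁ t j₁ j₂
          * ((Om t (j₁ + 1) (j₂ + 1))⁻¹ + rr t (j₁ + 1) j₂ * qq t (j₁ + 1) j₂)) ∧
    -- (3)  q̃_t = g g_{,2}⁻¹ q̃_{,2} + q̃ γ₂ (Ω̃_{,2}⁻¹ + r̃ q̃)_{,2}
    (∀ t j₁ j₂ (a : Fin m) (b : Fin n),
      HasDerivAt (fun s => qq s j₁ j₂ a b)
        ((g t j₁ j₂ * (g t j₁ (j₂ + 1))⁻¹ * qq t j₁ (j₂ + 1)
          + qq t j₁ j₂ * γ₂ t j₁ j₂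
            * ((Om t j₁ (j₂ + 1 + 1))⁻¹ + rr t j₁ (j₂ + 1) * qq t j₁ (j₂ + 1))) a b) t) ∧
    -- (4)  r̃_{,2} = −P r̃_{,1} − r̃ g g_{,1}⁻¹ + (Ω̃⁻¹ − r̃ q̃) γ₁ r̃_{,1}
    (∀ t j₁ j₂, rr t j₁ (j₂ + 1)
      = -(P t j₁ j₂ * rr t (j₁ + 1) j₂) - rr t j₁ j₂ * (g t j₁ j₂ * (g t (j₁ + 1) j₂)⁻¹)
        + ((Om t j₁ j₂)⁻¹ - rr t j₁ j₂ * qq t j₁ j₂) * γ₁ t j₁ j₂ * rr t (j₁ + 1) j₂) ∧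
    -- (5)  r̃_t = −(r̃ g)_{,-2} g⁻¹ + (Ω̃⁻¹ − r̃ q̃)_{,-2} γ₂ r̃
    (∀ t j₁ j₂ (a : Fin n) (b : Fin m),
      HasDerivAt (fun s => rr s j₁ j₂ a b)
        ((-((rr t j₁ (j₂ - 1) * g t j₁ (j₂ - 1)) * (g t j₁ j₂)⁻¹)
          + ((Om t j₁ (j₂ - 1))⁻¹ - rr t j₁ (j₂ - 1) * qq t j₁ (j₂ - 1))
            * γ₂ t j₁ j₂ * rr t j₁ j₂) a b) t) :=
  stmt_5_general m n g₀ hseed P Q om omt homt hom2 γ₁ γ₂ hγ₂ θ θt hθt hθ1 hθ2 η ηt hηt hη1 hη2 Om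
    Omt hOminv hOmt hOm1 hOm2 hOm3 g qq rr hg hqq hrr
end

section
/- Let g : ℝ × ℤ × ℤ → Mat(m×m, ℂ) be invertible, let q̃ be m×n and r̃ be n×m matrix functions, all entrywise differentiable in t, and let P, Q, γ₂ be n×n matrix functions satisfying γ₂_{,2} = γ₂ and Q γ₂_{,1} = γ₂ P. Suppose (g g_{,1}^{-1})_t + (g g_{,2}^{-1})_{,1,-2} − g g_{,2}^{-1} = (q̃_{,-2} γ₂ r̃)_{,2} − (q̃_{,-2} γ₂ r̃)_{,1}, q̃_{,1,-2} = −q̃ Q − g g_{,1}^{-1} q̃_{,1}, and r̃_{,2} = −P r̃_{,1} − r̃ g g_{,1}^{-1} (the source-extended system with γ₁ = 0). Then q̂ := q̃ γ₂ together with g and r̃ satisfies the self-consistent source extension of the semi-discrete chiral model: (g g_{,1}^{-1})_t + (g g_{,2}^{-1})_{,1,-2} − g g_{,2}^{-1} = (q̂_{,-2} r̃)_{,2} − (q̂_{,-2} r̃)_{,1}, q̂_{,1,-2} = −q̂ P − g g_{,1}^{-1} q̂_{,1}, and r̃_{,2} = −P r̃_{,1} − r̃ g g_{,1}^{-1}.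 -/
open Matrix

/-- absorbing `γ₂` into the source.  If `(g, q̃ (= qq), r̃ (= rr))` solves the
source-extended system with `γ₁ = 0`, then `(g, q̂ := q̃ γ₂, r̃)` solves the self-consistent
source extension of the semi-discrete chiral model. -/
theorem stmt_8 (m n : ℕ)
    (g : ℝ → ℤ → ℤ → Matrix (Fin m) (Fin m) ℂ)
    (qq : ℝ → ℤ → ℤ → Matrix (Fin m) (Fin n) ℂ)
    (rr : ℝ → ℤ → ℤ → Matrix (Fin n) (Fin m) ℂ)
    (P Q γ₂ : ℝ → ℤ → ℤ → Matrix (Fin n) (Fin n) ℂ)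
    (hginv : ∀ t j₁ j₂, IsUnit (g t j₁ j₂))
    (hgdiff : ∀ t j₁ j₂ (a b : Fin m), DifferentiableAt ℝ (fun s => g s j₁ j₂ a b) t)
    (hqdiff : ∀ t j₁ j₂ (a : Fin m) (b : Fin n), DifferentiableAt ℝ (fun s => qq s j₁ j₂ a b) t)
    (hrdiff : ∀ t j₁ j₂ (a : Fin n) (b : Fin m), DifferentiableAt ℝ (fun s => rr s j₁ j₂ a b) t)
    (hγ₂2 : ∀ t j₁ j₂, γ₂ t j₁ (j₂ + 1) = γ₂ t j₁ j₂)
    (hQγ₂ : ∀ t j₁ j₂, Q t j₁ j₂ * γ₂ t (j₁ + 1) j₂ = γ₂ t j₁ j₂ * P t j₁ j₂)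
    -- (g g_{,1}⁻¹)_t + (g g_{,2}⁻¹)_{,1,-2} − g g_{,2}⁻¹ = (q̃_{,-2} γ₂ r̃)_{,2} − (q̃_{,-2} γ₂ r̃)_{,1}
    (heq1 : ∀ t j₁ j₂ (a b : Fin m),
      HasDerivAt (fun s => (g s j₁ j₂ * (g s (j₁ + 1) j₂)⁻¹) a b)
        ((g t j₁ j₂ * (g t j₁ (j₂ + 1))⁻¹ - g t (j₁ + 1) (j₂ - 1) * (g t (j₁ + 1) j₂)⁻¹
          + qq t j₁ j₂ * γ₂ t j₁ (j₂ + 1) * rr t j₁ (j₂ + 1)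
          - qq t (j₁ + 1) (j₂ - 1) * γ₂ t (j₁ + 1) j₂ * rr t (j₁ + 1) j₂) a b) t)
    -- q̃_{,1,-2} = −q̃ Q − g g_{,1}⁻¹ q̃_{,1}
    (heq2 : ∀ t j₁ j₂, qq t (j₁ + 1) (j₂ - 1)
      = -(qq t j₁ j₂ * Q t j₁ j₂) - g t j₁ j₂ * (g t (j₁ + 1) j₂)⁻¹ * qq t (j₁ + 1) j₂)
    -- r̃_{,2} = −P r̃_{,1} − r̃ g g_{,1}⁻¹
    (heq3 : ∀ t j₁ j₂, rr t j₁ (j₂ + 1)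
      = -(P t j₁ j₂ * rr t (j₁ + 1) j₂) - rr t j₁ j₂ * (g t j₁ j₂ * (g t (j₁ + 1) j₂)⁻¹)) :
    -- conclusions for q̂ := q̃ γ₂
    (∀ t j₁ j₂ (a b : Fin m),
      HasDerivAt (fun s => (g s j₁ j₂ * (g s (j₁ + 1) j₂)⁻¹) a b)
        ((g t j₁ j₂ * (g t j₁ (j₂ + 1))⁻¹ - g t (j₁ + 1) (j₂ - 1) * (g t (j₁ + 1) j₂)⁻¹
          + (qq t j₁ j₂ * γ₂ t j₁ j₂) * rr t j₁ (j₂ + 1)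
          - (qq t (j₁ + 1) (j₂ - 1) * γ₂ t (j₁ + 1) (j₂ - 1)) * rr t (j₁ + 1) j₂) a b) t) ∧
    (∀ t j₁ j₂, qq t (j₁ + 1) (j₂ - 1) * γ₂ t (j₁ + 1) (j₂ - 1)
      = -((qq t j₁ j₂ * γ₂ t j₁ j₂) * P t j₁ j₂)
        - g t j₁ j₂ * (g t (j₁ + 1) j₂)⁻¹ * (qq t (j₁ + 1) j₂ * γ₂ t (j₁ + 1) j₂)) ∧
    (∀ t j₁ j₂, rr t j₁ (j₂ + 1)
      = -(P t j₁ j₂ * rr t (j₁ + 1) j₂) - rr t j₁ j₂ * (g t j₁ j₂ * (g t (j₁ + 1) j₂)⁻¹)) := by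
  have hprev : ∀ t j₁ (j₂ : ℤ), γ₂ t j₁ (j₂ - 1) = γ₂ t j₁ j₂ := by
    intro t j₁ j₂
    have h := hγ₂2 t j₁ (j₂ - 1)
    rw [sub_add_cancel] at h
    exact h.symm
  refine ⟨?_, ?_, heq3⟩
  · intro t j₁ j₂ a b
    have h := heq1 t j₁ j₂ a b
    rw [hγ₂2] at h
    rw [hprev]
    exact h
  · intro t j₁ j₂
    rw [hprev]
    have h := congrArg (· * γ₂ t (j₁ + 1) j₂) (heq2 t j₁ j₂)
    rw [h]
    simp only [Matrix.sub_mul, Matrix.neg_mul, Matrix.mul_assoc]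
    rw [hQγ₂]
end

section
/- Let N ≥ 1, let P and Q be constant n×n complex matrices, and for a = 1, …, N let Λ_a, Λ̃_a be invertible n×n complex matrices with Λ_a P = P Λ_a, Λ̃_a Q = Q Λ̃_a, and such that I + Λ_a P and I + Q Λ̃_a are invertible; let A_a be constant m×n and B_a constant n×m matrices. Then θ(t, j₁, j₂) := Σ_{a=1}^N A_a Λ_a^{−j₁} (−1)^{j₂} (I + Λ_a P)^{−j₂} exp(−(I + Λ_a P)^{-1} t) satisfies θ_{,-2} = −(θ P)_{,-1} − θ and θ_t = θ_{,2}, and η(t, j₁, j₂) := Σ_{a=1}^N exp((I + Q Λ̃_a)^{-1} t) Λ̃_a^{j₁} (−1)^{j₂} (I + Q Λ̃_a)^{j₂} B_a satisfies η_{,2} = −Q η_{,1} − η and η_t = −η_{,-2}. -/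
/-!
With `S = -(I + ΛP)`, and using `(-1)^{j₂} = (-1)^{-j₂}`, each summand of `θ` is the discrete
plane wave `A Λ^{-j₁} S^{-j₂} exp(t S⁻¹)`; likewise each summand of `η` is
`exp(t M⁻¹) Λ̃^{j₁} S̃^{j₂} B` with `M = I + QΛ̃` and `S̃ = -M`. A shift in `j₁` or `j₂` multiplies
the lattice factor by `Λ^{±1}` or `S^{±1}`, so both difference equations reduce to the relation
`S = -(I + ΛP)`, given that `Λ`, `P`, `S` and the exponential commute; differentiating in `t`
produces a factor `S⁻¹` resp. `M⁻¹ = -S̃⁻¹`, which is again a shift in `j₂`. All equations are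
linear and pass to the sums over `a`.
-/

open Matrix

namespace Matrix

variable {ι K : Type*} [Fintype ι] [DecidableEq ι] [Field K]

theorem isUnit_det_neg_iff {M : Matrix ι ι K} : IsUnit (-M).det ↔ IsUnit M.det := by
  simp [det_neg]

theorem inv_neg (M : Matrix ι ι K) : (-M)⁻¹ = -M⁻¹ := by
  by_cases hM : IsUnit M.det
  · exact inv_eq_left_inv (by rw [neg_mul_neg, nonsing_inv_mul M hM])
  · rw [nonsing_inv_apply_not_isUnit _ hM,
      nonsing_inv_apply_not_isUnit _ (isUnit_det_neg_iff.not.mpr hM), neg_zero]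

theorem neg_zpow {M : Matrix ι ι K} (hM : IsUnit M.det) (k : ℤ) :
    (-M) ^ k = (-1 : K) ^ k • M ^ k := by
  have hM' : IsUnit (-M).det := isUnit_det_neg_iff.mpr hM
  induction k using Int.induction_on with
  | zero => simp
  | succ i ih =>
    rw [zpow_add_one hM', ih, zpow_add_one₀ (by norm_num), zpow_add_one hM]
    simp
  | pred i ih =>
    rw [zpow_sub_one hM', ih, inv_neg, zpow_sub_one₀ (by norm_num), zpow_sub_one hM]
    simp

theorem Commute.inv_right {A B : Matrix ι ι K} (h : Commute A B) : Commute A B⁻¹ := by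
  simpa only [zpow_neg_one] using Commute.zpow_right h (-1)

theorem zpow_mul_zpow_add_one {Λ P S : Matrix ι ι K} (hΛ : IsUnit Λ.det) (hS : IsUnit S.det)
    (hΛP : Commute Λ P) (hSΛP : S = -(1 + Λ * P)) (i k : ℤ) :
    Λ ^ i * S ^ (k + 1) = -(Λ ^ (i + 1) * S ^ k * P) - Λ ^ i * S ^ k := by
  have hΛS : Commute Λ S :=
    hSΛP ▸ ((Commute.one_right Λ).add_right ((Commute.refl Λ).mul_right hΛP)).neg_right
  rw [zpow_add_one hS, zpow_add_one hΛ, mul_assoc (Λ ^ i) Λ, (Commute.zpow_right hΛS k).eq,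
    hSΛP]
  noncomm_ring

end Matrix

section Modes

variable {ι κ κ' : Type*} [Fintype ι] [DecidableEq ι]

theorem hasDerivAt_exp_smul_apply (X : Matrix ι ι ℂ) (t : ℝ) (k l : ι) :
    HasDerivAt (fun s : ℝ => NormedSpace.exp (s • X) k l)
      ((NormedSpace.exp (t • X) * X) k l) t :=
  -- an auxiliary norm: the statement only involves the entries
  letI := Matrix.linftyOpNormedRing (n := ι) (α := ℂ)
  letI := Matrix.linftyOpNormedAlgebra (R := ℝ) (n := ι) (α := ℂ)
  (entryLinearMap ℝ ℂ k l).toContinuousLinearMap.hasFDerivAt.comp_hasDerivAt t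
    (hasDerivAt_exp_smul_const X t)

theorem hasDerivAt_mul_exp_smul_mul_apply (C : Matrix κ ι ℂ) (X : Matrix ι ι ℂ)
    (D : Matrix ι κ' ℂ) (t : ℝ) (a : κ) (b : κ') :
    HasDerivAt (fun s : ℝ => (C * NormedSpace.exp (s • X) * D) a b)
      ((C * (NormedSpace.exp (t • X) * X) * D) a b) t := by
  simp only [mul_apply]
  exact HasDerivAt.fun_sum fun l _ => (HasDerivAt.fun_sum fun k _ =>
    (hasDerivAt_exp_smul_apply X t k l).const_mul (C a k)).mul_const (D l b)

noncomputable def thetaMode (A : Matrix κ ι ℂ) (Λ P : Matrix ι ι ℂ) (t : ℝ) (j₁ j₂ : ℤ) :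
    Matrix κ ι ℂ :=
  A * Λ ^ (-j₁) * (((-1 : ℂ) ^ j₂) • (1 + Λ * P) ^ (-j₂))
    * NormedSpace.exp ((-t) • (1 + Λ * P)⁻¹)

noncomputable def etaMode (B : Matrix ι κ ℂ) (Λ Q : Matrix ι ι ℂ) (t : ℝ) (j₁ j₂ : ℤ) :
    Matrix ι κ ℂ :=
  NormedSpace.exp (t • (1 + Q * Λ)⁻¹) * Λ ^ j₁ * (((-1 : ℂ) ^ j₂) • (1 + Q * Λ) ^ j₂) * B

theorem thetaMode_eq {A : Matrix κ ι ℂ} {Λ P : Matrix ι ι ℂ} (hM : IsUnit (1 + Λ * P).det)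
    (t : ℝ) (j₁ j₂ : ℤ) :
    thetaMode A Λ P t j₁ j₂ =
      A * (Λ ^ (-j₁) * (-(1 + Λ * P)) ^ (-j₂)) * NormedSpace.exp (t • (-(1 + Λ * P))⁻¹) := by
  rw [thetaMode, neg_zpow hM, ← _root_.inv_zpow', inv_neg_one, Matrix.inv_neg, smul_neg,
    ← neg_smul, Matrix.mul_assoc A]

theorem etaMode_eq {B : Matrix ι κ ℂ} {Λ Q : Matrix ι ι ℂ} (hM : IsUnit (1 + Q * Λ).det)
    (t : ℝ) (j₁ j₂ : ℤ) :
    etaMode B Λ Q t j₁ j₂ =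
      NormedSpace.exp (t • (1 + Q * Λ)⁻¹) * (Λ ^ j₁ * (-(1 + Q * Λ)) ^ j₂) * B := by
  rw [etaMode, neg_zpow hM, Matrix.mul_assoc _ (Λ ^ j₁)]

theorem thetaMode_recurrence {A : Matrix κ ι ℂ} {Λ P : Matrix ι ι ℂ} (hΛ : IsUnit Λ.det)
    (hM : IsUnit (1 + Λ * P).det) (hΛP : Commute Λ P) (t : ℝ) (j₁ j₂ : ℤ) :
    thetaMode A Λ P t j₁ (j₂ - 1) =
      -(thetaMode A Λ P t (j₁ - 1) j₂ * P) - thetaMode A Λ P t j₁ j₂ := by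
  have hS : IsUnit (-(1 + Λ * P)).det := isUnit_det_neg_iff.mpr hM
  have hPS : Commute P (-(1 + Λ * P)) :=
    ((Commute.one_right P).add_right (hΛP.symm.mul_right (Commute.refl P))).neg_right
  have hPE := (((Matrix.Commute.inv_right hPS).smul_right t).exp_right).eq
  rw [thetaMode_eq hM, thetaMode_eq hM, thetaMode_eq hM, show -(j₂ - 1) = -j₂ + 1 by ring,
    show -(j₁ - 1) = -j₁ + 1 by ring, zpow_mul_zpow_add_one hΛ hS hΛP rfl]
  simp only [Matrix.mul_sub, Matrix.sub_mul, Matrix.mul_neg, Matrix.neg_mul, Matrix.mul_assoc,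
    hPE]

theorem etaMode_recurrence {B : Matrix ι κ ℂ} {Λ Q : Matrix ι ι ℂ} (hΛ : IsUnit Λ.det)
    (hM : IsUnit (1 + Q * Λ).det) (hΛQ : Commute Λ Q) (t : ℝ) (j₁ j₂ : ℤ) :
    etaMode B Λ Q t j₁ (j₂ + 1) =
      -(Q * etaMode B Λ Q t (j₁ + 1) j₂) - etaMode B Λ Q t j₁ j₂ := by
  have hS : IsUnit (-(1 + Q * Λ)).det := isUnit_det_neg_iff.mpr hM
  have hQS : Commute Q (-(1 + Q * Λ)) :=
    ((Commute.one_right Q).add_right ((Commute.refl Q).mul_right hΛQ.symm)).neg_right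
  have hQE : Commute Q (NormedSpace.exp (t • (1 + Q * Λ)⁻¹)) :=
    (((Matrix.Commute.inv_right (Commute.neg_right_iff.mp hQS)).smul_right t).exp_right)
  have hQW : Commute Q (Λ ^ (j₁ + 1) * (-(1 + Q * Λ)) ^ j₂) :=
    (Matrix.Commute.zpow_right hΛQ.symm _).mul_right (Matrix.Commute.zpow_right hQS _)
  rw [etaMode_eq hM, etaMode_eq hM, etaMode_eq hM,
    zpow_mul_zpow_add_one hΛ hS hΛQ (by rw [hΛQ.eq]), ← hQW.eq]
  simp only [Matrix.mul_sub, Matrix.sub_mul, Matrix.mul_neg, Matrix.neg_mul, Matrix.mul_assoc]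
  rw [← Matrix.mul_assoc _ Q, ← hQE.eq, Matrix.mul_assoc]

theorem hasDerivAt_thetaMode_apply (A : Matrix κ ι ℂ) {Λ P : Matrix ι ι ℂ}
    (hM : IsUnit (1 + Λ * P).det) (t : ℝ) (j₁ j₂ : ℤ) (a : κ) (b : ι) :
    HasDerivAt (fun s => thetaMode A Λ P s j₁ j₂ a b) (thetaMode A Λ P t j₁ (j₂ + 1) a b) t := by
  have hS : IsUnit (-(1 + Λ * P)).det := isUnit_det_neg_iff.mpr hM
  have h := hasDerivAt_mul_exp_smul_mul_apply (A * (Λ ^ (-j₁) * (-(1 + Λ * P)) ^ (-j₂)))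
    (-(1 + Λ * P))⁻¹ 1 t a b
  rw [← ((Commute.refl _).smul_right t).exp_right.eq] at h
  simp only [thetaMode_eq hM, show -(j₂ + 1) = -j₂ - 1 by ring, zpow_sub_one hS]
  simpa only [Matrix.mul_one, Matrix.mul_assoc] using h

theorem hasDerivAt_etaMode_apply (B : Matrix ι κ ℂ) {Λ Q : Matrix ι ι ℂ}
    (hM : IsUnit (1 + Q * Λ).det) (hΛQ : Commute Λ Q) (t : ℝ) (j₁ j₂ : ℤ) (a : ι) (b : κ) :
    HasDerivAt (fun s => etaMode B Λ Q s j₁ j₂ a b) (-etaMode B Λ Q t j₁ (j₂ - 1) a b) t := by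
  have hS : IsUnit (-(1 + Q * Λ)).det := isUnit_det_neg_iff.mpr hM
  have hMW : Commute (1 + Q * Λ) (Λ ^ j₁ * (-(1 + Q * Λ)) ^ j₂) :=
    (Matrix.Commute.zpow_right
        ((Commute.one_left Λ).add_left (hΛQ.symm.mul_left (Commute.refl Λ))) j₁).mul_right
      (Matrix.Commute.zpow_right (Commute.refl (1 + Q * Λ)).neg_right j₂)
  have h := hasDerivAt_mul_exp_smul_mul_apply 1 (1 + Q * Λ)⁻¹
    (Λ ^ j₁ * (-(1 + Q * Λ)) ^ j₂ * B) t a b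
  rw [Matrix.one_mul, Matrix.mul_assoc _ (1 + Q * Λ)⁻¹, ← Matrix.mul_assoc (1 + Q * Λ)⁻¹,
    (Matrix.Commute.inv_right hMW.symm).symm.eq] at h
  simp only [etaMode_eq hM, zpow_sub_one hS, Matrix.inv_neg, ← Matrix.neg_apply]
  simpa only [Matrix.one_mul, Matrix.mul_assoc, Matrix.mul_neg, Matrix.neg_mul, neg_neg] using h

end Modes

theorem stmt_10_general (m n N : ℕ)
    (P Q : Matrix (Fin n) (Fin n) ℂ)
    (Λ Λt : Fin N → Matrix (Fin n) (Fin n) ℂ)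
    (hΛ : ∀ a, IsUnit (Λ a)) (hΛt : ∀ a, IsUnit (Λt a))
    (hΛP : ∀ a, Λ a * P = P * Λ a) (hΛtQ : ∀ a, Λt a * Q = Q * Λt a)
    (hIP : ∀ a, IsUnit (1 + Λ a * P)) (hIQ : ∀ a, IsUnit (1 + Q * Λt a))
    (A : Fin N → Matrix (Fin m) (Fin n) ℂ) (B : Fin N → Matrix (Fin n) (Fin m) ℂ)
    (θ : ℝ → ℤ → ℤ → Matrix (Fin m) (Fin n) ℂ)
    (η : ℝ → ℤ → ℤ → Matrix (Fin n) (Fin m) ℂ)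
    (hθ : ∀ t j₁ j₂, θ t j₁ j₂ =
      ∑ a : Fin N, A a * (Λ a) ^ (-j₁) * (((-1 : ℂ) ^ j₂) • (1 + Λ a * P) ^ (-j₂))
        * NormedSpace.exp ((-t) • (1 + Λ a * P)⁻¹))
    (hη : ∀ t j₁ j₂, η t j₁ j₂ =
      ∑ a : Fin N, NormedSpace.exp (t • (1 + Q * Λt a)⁻¹) * (Λt a) ^ j₁
        * (((-1 : ℂ) ^ j₂) • (1 + Q * Λt a) ^ j₂) * B a) :
    (∀ t j₁ j₂, θ t j₁ (j₂ - 1) = -(θ t (j₁ - 1) j₂ * P) - θ t j₁ j₂) ∧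
    (∀ t j₁ j₂ (a : Fin m) (b : Fin n),
      HasDerivAt (fun s => θ s j₁ j₂ a b) (θ t j₁ (j₂ + 1) a b) t) ∧
    (∀ t j₁ j₂, η t j₁ (j₂ + 1) = -(Q * η t (j₁ + 1) j₂) - η t j₁ j₂) ∧
    (∀ t j₁ j₂ (a : Fin n) (b : Fin m),
      HasDerivAt (fun s => η s j₁ j₂ a b) (-(η t j₁ (j₂ - 1)) a b) t) := by
  obtain rfl : θ = fun t j₁ j₂ => ∑ a, thetaMode (A a) (Λ a) P t j₁ j₂ :=
    funext fun t => funext fun j₁ => funext (hθ t j₁)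
  obtain rfl : η = fun t j₁ j₂ => ∑ a, etaMode (B a) (Λt a) Q t j₁ j₂ :=
    funext fun t => funext fun j₁ => funext (hη t j₁)
  have hΛdet a := (isUnit_iff_isUnit_det _).mp (hΛ a)
  have hΛtdet a := (isUnit_iff_isUnit_det _).mp (hΛt a)
  have hIPdet a := (isUnit_iff_isUnit_det _).mp (hIP a)
  have hIQdet a := (isUnit_iff_isUnit_det _).mp (hIQ a)
  refine ⟨fun t j₁ j₂ => ?_, fun t j₁ j₂ a b => ?_, fun t j₁ j₂ => ?_, fun t j₁ j₂ a b => ?_⟩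
  · simp only [thetaMode_recurrence (hΛdet _) (hIPdet _) (hΛP _), Matrix.sum_mul,
      Finset.sum_sub_distrib, Finset.sum_neg_distrib]
  · simpa only [Matrix.sum_apply] using
      HasDerivAt.fun_sum fun x _ => hasDerivAt_thetaMode_apply (A x) (hIPdet x) t j₁ j₂ a b
  · simp only [etaMode_recurrence (hΛtdet _) (hIQdet _) (hΛtQ _), Matrix.mul_sum,
      Finset.sum_sub_distrib, Finset.sum_neg_distrib]
  · simpa only [Matrix.neg_apply, Matrix.sum_apply, Finset.sum_neg_distrib] using
      HasDerivAt.fun_sum fun x _ => hasDerivAt_etaMode_apply (B x) (hIQdet x) (hΛtQ x) t j₁ j₂ a b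

/-- explicit solutions of the linear equations of the binary Darboux
transformation for the semi-discrete chiral model with constant seed:
`θ = Σ_a A_a Λ_a^{−j₁} (−1)^{j₂} (I+Λ_a P)^{−j₂} exp(−(I+Λ_a P)⁻¹ t)` satisfies
`θ_{,-2} = −(θ P)_{,-1} − θ` and `θ_t = θ_{,2}`, and
`η = Σ_a exp((I+QΛ̃_a)⁻¹ t) Λ̃_a^{j₁} (−1)^{j₂} (I+QΛ̃_a)^{j₂} B_a` satisfies
`η_{,2} = −Q η_{,1} − η` and `η_t = −η_{,-2}`. -/
theorem stmt_10 (m n N : ℕ) (hN : 1 ≤ N)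
    (P Q : Matrix (Fin n) (Fin n) ℂ)
    (Λ Λt : Fin N → Matrix (Fin n) (Fin n) ℂ)
    (hΛ : ∀ a, IsUnit (Λ a)) (hΛt : ∀ a, IsUnit (Λt a))
    (hΛP : ∀ a, Λ a * P = P * Λ a) (hΛtQ : ∀ a, Λt a * Q = Q * Λt a)
    (hIP : ∀ a, IsUnit (1 + Λ a * P)) (hIQ : ∀ a, IsUnit (1 + Q * Λt a))
    (A : Fin N → Matrix (Fin m) (Fin n) ℂ) (B : Fin N → Matrix (Fin n) (Fin m) ℂ)
    (θ : ℝ → ℤ → ℤ → Matrix (Fin m) (Fin n) ℂ)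
    (η : ℝ → ℤ → ℤ → Matrix (Fin n) (Fin m) ℂ)
    (hθ : ∀ t j₁ j₂, θ t j₁ j₂ =
      ∑ a : Fin N, A a * (Λ a) ^ (-j₁) * (((-1 : ℂ) ^ j₂) • (1 + Λ a * P) ^ (-j₂))
        * NormedSpace.exp ((-t) • (1 + Λ a * P)⁻¹))
    (hη : ∀ t j₁ j₂, η t j₁ j₂ =
      ∑ a : Fin N, NormedSpace.exp (t • (1 + Q * Λt a)⁻¹) * (Λt a) ^ j₁
        * (((-1 : ℂ) ^ j₂) • (1 + Q * Λt a) ^ j₂) * B a) :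
    (∀ t j₁ j₂, θ t j₁ (j₂ - 1) = -(θ t (j₁ - 1) j₂ * P) - θ t j₁ j₂) ∧
    (∀ t j₁ j₂ (a : Fin m) (b : Fin n),
      HasDerivAt (fun s => θ s j₁ j₂ a b) (θ t j₁ (j₂ + 1) a b) t) ∧
    (∀ t j₁ j₂, η t j₁ (j₂ + 1) = -(Q * η t (j₁ + 1) j₂) - η t j₁ j₂) ∧
    (∀ t j₁ j₂ (a : Fin n) (b : Fin m),
      HasDerivAt (fun s => η s j₁ j₂ a b) (-(η t j₁ (j₂ - 1)) a b) t) :=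
  stmt_10_general m n N P Q Λ Λt hΛ hΛt hΛP hΛtQ hIP hIQ A B θ η hθ hη
end

section
/- Let k ≥ 1 and l be integers, N ≥ 1, and let Λ₁, …, Λ_N be invertible n×n complex matrices and P a constant n×n matrix such that P = −(Λ_a^k + Λ_a^{k−l}) for every a. Then for arbitrary constant m×n matrices A_a, the function θ(t, j) := Σ_{a=1}^N A_a exp(Λ_a^l t) Λ_a^j satisfies θ_t = θ_{(l)} and θ_{(l)} = −θ_{(l−k)} P − θ. Likewise, if Λ̃₁, …, Λ̃_N are invertible n×n matrices and Q a constant n×n matrix with Q = −(Λ̃_a^k + Λ̃_a^{k−l}) for every a, then for arbitrary constant n×m matrices B_a, the function η(t, j) := Σ_{a=1}^N exp(−Λ̃_a^l t) Λ̃_a^{−j} B_a satisfies η_t = −η_{(−l)} and −η_{(−l)} = Q η_{(k−l)} + η. -/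
/-!
The equations are linear, so it suffices to check them for a single summand. In `t` this is
`d/dt exp (t M) = exp (t M) * M` with `M = ± Λ ^ l`. In `j` all the matrices involved are
integer powers of one invertible `Λ` or `exp (t Λ ^ l)`, which commute; both lattice equations
then become the relation `P = -(Λ ^ k + Λ ^ (k - l))` multiplied by a suitable power of `Λ`.
-/

open Matrix

namespace Matrix

variable {𝕜 : Type*} [RCLike 𝕜] {m n p : Type*} [Fintype n] [DecidableEq n]

theorem hasDerivAt_exp_smul_apply (M : Matrix n n 𝕜) (t : ℝ) (i j : n) :
    HasDerivAt (fun s : ℝ => NormedSpace.exp (s • M) i j)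
      ((NormedSpace.exp (t • M) * M) i j) t := by
  -- any normed-algebra structure on matrices induces the entrywise topology
  let _ := Matrix.linftyOpNormedRing (n := n) (α := 𝕜)
  let _ := Matrix.linftyOpNormedAlgebra (R := ℝ) (n := n) (α := 𝕜)
  let entry : Matrix n n 𝕜 →L[ℝ] 𝕜 := ⟨entryLinearMap ℝ 𝕜 i j, by fun_prop⟩
  exact entry.hasFDerivAt.comp_hasDerivAt t (hasDerivAt_exp_smul_const M t)

theorem hasDerivAt_mul_exp_smul_mul_apply (A : Matrix m n 𝕜) (M : Matrix n n 𝕜)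
    (C : Matrix n p 𝕜) (t : ℝ) (i : m) (j : p) :
    HasDerivAt (fun s : ℝ => (A * NormedSpace.exp (s • M) * C) i j)
      ((A * (NormedSpace.exp (t • M) * M) * C) i j) t := by
  simp only [mul_apply, Finset.sum_mul]
  exact HasDerivAt.fun_sum fun k _ => HasDerivAt.fun_sum fun r _ =>
    ((hasDerivAt_exp_smul_apply M t r k).const_mul (A i r)).mul_const (C k j)

variable {Λ : Matrix n n 𝕜}

theorem zpow_mul_zpow_of_add_eq (hΛ : IsUnit Λ.det) {a b c : ℤ} (h : a + b = c) :
    Λ ^ a * Λ ^ b = Λ ^ c := by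
  rw [← zpow_add hΛ, h]

theorem hasDerivAt_mul_exp_smul_zpow_mul_zpow_apply (hΛ : IsUnit Λ.det) (A : Matrix m n 𝕜)
    (l j : ℤ) (t : ℝ) (a : m) (b : n) :
    HasDerivAt (fun s : ℝ => (A * NormedSpace.exp (s • Λ ^ l) * Λ ^ j) a b)
      ((A * NormedSpace.exp (t • Λ ^ l) * Λ ^ (j + l)) a b) t := by
  have h := hasDerivAt_mul_exp_smul_mul_apply A (Λ ^ l) (Λ ^ j) t a b
  rwa [← Matrix.mul_assoc A, Matrix.mul_assoc (A * _),
    zpow_mul_zpow_of_add_eq hΛ (add_comm l j)] at h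

theorem hasDerivAt_exp_neg_smul_zpow_mul_zpow_neg_mul_apply (hΛ : IsUnit Λ.det)
    (B : Matrix n p 𝕜) (l j : ℤ) (t : ℝ) (a : n) (b : p) :
    HasDerivAt (fun s : ℝ => (NormedSpace.exp ((-s) • Λ ^ l) * Λ ^ (-j) * B) a b)
      (-(NormedSpace.exp ((-t) • Λ ^ l) * Λ ^ (-(j - l)) * B) a b) t := by
  have h := hasDerivAt_mul_exp_smul_mul_apply 1 (-Λ ^ l) (Λ ^ (-j) * B) t a b
  simp only [neg_smul, ← smul_neg, Matrix.one_mul, Matrix.mul_neg, Matrix.neg_mul,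
    Matrix.mul_assoc] at h ⊢
  rwa [← Matrix.mul_assoc (Λ ^ l),
    zpow_mul_zpow_of_add_eq hΛ (by ring : l + -j = -(j - l))] at h

theorem mul_zpow_add_sub_mul_eq_neg {P : Matrix n n 𝕜} {k l : ℤ} (hΛ : IsUnit Λ.det)
    (hP : P = -(Λ ^ k + Λ ^ (k - l))) (X : Matrix m n 𝕜) (j : ℤ) :
    X * Λ ^ (j + (l - k)) * P = -(X * Λ ^ (j + l) + X * Λ ^ j) := by
  rw [hP, Matrix.mul_neg, Matrix.mul_assoc, Matrix.mul_add,
    zpow_mul_zpow_of_add_eq hΛ (c := j + l) (by ring),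
    zpow_mul_zpow_of_add_eq hΛ (c := j) (by ring), Matrix.mul_add]

theorem mul_mul_zpow_neg_add_sub_mul_eq_neg {Q E : Matrix n n 𝕜} {k l : ℤ}
    (hΛ : IsUnit Λ.det) (hQ : Q = -(Λ ^ k + Λ ^ (k - l))) (hE : Commute Λ E)
    (B : Matrix n p 𝕜) (j : ℤ) :
    Q * (E * Λ ^ (-(j + (k - l))) * B) = -(E * Λ ^ (-(j - l)) * B + E * Λ ^ (-j) * B) := by
  rw [hQ, Matrix.neg_mul, ← Matrix.mul_assoc, ← Matrix.mul_assoc,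
    ((Commute.zpow_left hE k).add_left (Commute.zpow_left hE (k - l))).eq, Matrix.mul_assoc E,
    Matrix.add_mul, zpow_mul_zpow_of_add_eq hΛ (c := -(j - l)) (by ring),
    zpow_mul_zpow_of_add_eq hΛ (c := -j) (by ring), Matrix.mul_add, Matrix.add_mul]

end Matrix

theorem stmt_12_general (m n N : ℕ) (k l : ℤ)
    (Λ Λt : Fin N → Matrix (Fin n) (Fin n) ℂ)
    (hΛ : ∀ a, IsUnit (Λ a)) (hΛt : ∀ a, IsUnit (Λt a))
    (P Q : Matrix (Fin n) (Fin n) ℂ)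
    (hP : ∀ a, P = -((Λ a) ^ k + (Λ a) ^ (k - l)))
    (hQ : ∀ a, Q = -((Λt a) ^ k + (Λt a) ^ (k - l)))
    (A : Fin N → Matrix (Fin m) (Fin n) ℂ) (B : Fin N → Matrix (Fin n) (Fin m) ℂ)
    (θ : ℝ → ℤ → Matrix (Fin m) (Fin n) ℂ)
    (η : ℝ → ℤ → Matrix (Fin n) (Fin m) ℂ)
    (hθ : ∀ t j, θ t j = ∑ a : Fin N, A a * NormedSpace.exp (t • (Λ a) ^ l) * (Λ a) ^ j)
    (hη : ∀ t j, η t j = ∑ a : Fin N, NormedSpace.exp ((-t) • (Λt a) ^ l) * (Λt a) ^ (-j) * B a) :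
    (∀ t j (a : Fin m) (b : Fin n),
      HasDerivAt (fun s => θ s j a b) (θ t (j + l) a b) t) ∧
    (∀ t j, θ t (j + l) = -(θ t (j + (l - k)) * P) - θ t j) ∧
    (∀ t j (a : Fin n) (b : Fin m),
      HasDerivAt (fun s => η s j a b) (-(η t (j - l)) a b) t) ∧
    (∀ t j, -η t (j - l) = Q * η t (j + (k - l)) + η t j) := by
  have hdet a : IsUnit (Λ a).det := (isUnit_iff_isUnit_det _).mp (hΛ a)
  have hdett a : IsUnit (Λt a).det := (isUnit_iff_isUnit_det _).mp (hΛt a)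
  refine ⟨fun t j a b => ?_, fun t j => ?_, fun t j a b => ?_, fun t j => ?_⟩
  · simp only [hθ, Matrix.sum_apply]
    exact HasDerivAt.fun_sum fun x _ =>
      hasDerivAt_mul_exp_smul_zpow_mul_zpow_apply (hdet x) (A x) l j t a b
  · simp only [hθ, Matrix.sum_mul, mul_zpow_add_sub_mul_eq_neg (hdet _) (hP _), Finset.sum_neg_distrib,
      neg_neg, Finset.sum_add_distrib, add_sub_cancel_right]
  · simp only [hη, Matrix.sum_apply, ← Finset.sum_neg_distrib]
    exact HasDerivAt.fun_sum fun x _ =>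
      hasDerivAt_exp_neg_smul_zpow_mul_zpow_neg_mul_apply (hdett x) (B x) l j t a b
  · have hE x : Commute (Λt x) (NormedSpace.exp ((-t) • Λt x ^ l)) :=
      ((Matrix.Commute.self_zpow (Λt x) l).smul_right (-t)).exp_right
    simp only [hη, Matrix.mul_sum, mul_mul_zpow_neg_add_sub_mul_eq_neg (hdett _) (hQ _) (hE _),
      Finset.sum_neg_distrib, Finset.sum_add_distrib]
    abel

/-- explicit solutions of the linear equations of the binary Darboux
transformation for the first family of generalized Volterra lattices with constant seed.
With `P = −(Λ_a^k + Λ_a^{k−l})` for all `a`, `θ = Σ_a A_a exp(Λ_a^l t) Λ_a^j` satisfies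
`θ_t = θ_{(l)}` and `θ_{(l)} = −θ_{(l−k)} P − θ`; with `Q = −(Λ̃_a^k + Λ̃_a^{k−l})` for all
`a`, `η = Σ_a exp(−Λ̃_a^l t) Λ̃_a^{−j} B_a` satisfies `η_t = −η_{(−l)}` and
`−η_{(−l)} = Q η_{(k−l)} + η`. -/
theorem stmt_12 (m n N : ℕ) (hN : 1 ≤ N) (k l : ℤ) (hk : 1 ≤ k)
    (Λ Λt : Fin N → Matrix (Fin n) (Fin n) ℂ)
    (hΛ : ∀ a, IsUnit (Λ a)) (hΛt : ∀ a, IsUnit (Λt a))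
    (P Q : Matrix (Fin n) (Fin n) ℂ)
    (hP : ∀ a, P = -((Λ a) ^ k + (Λ a) ^ (k - l)))
    (hQ : ∀ a, Q = -((Λt a) ^ k + (Λt a) ^ (k - l)))
    (A : Fin N → Matrix (Fin m) (Fin n) ℂ) (B : Fin N → Matrix (Fin n) (Fin m) ℂ)
    (θ : ℝ → ℤ → Matrix (Fin m) (Fin n) ℂ)
    (η : ℝ → ℤ → Matrix (Fin n) (Fin m) ℂ)
    (hθ : ∀ t j, θ t j = ∑ a : Fin N, A a * NormedSpace.exp (t • (Λ a) ^ l) * (Λ a) ^ j)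
    (hη : ∀ t j, η t j = ∑ a : Fin N, NormedSpace.exp ((-t) • (Λt a) ^ l) * (Λt a) ^ (-j) * B a) :
    (∀ t j (a : Fin m) (b : Fin n),
      HasDerivAt (fun s => θ s j a b) (θ t (j + l) a b) t) ∧
    (∀ t j, θ t (j + l) = -(θ t (j + (l - k)) * P) - θ t j) ∧
    (∀ t j (a : Fin n) (b : Fin m),
      HasDerivAt (fun s => η s j a b) (-(η t (j - l)) a b) t) ∧
    (∀ t j, -η t (j - l) = Q * η t (j + (k - l)) + η t j) :=
  stmt_12_general m n N k l Λ Λt hΛ hΛt P Q hP hQ A B θ η hθ hη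
end

section
/- Let k ≥ 1 and l be integers, N ≥ 1, Λ_a and Λ̃_a (a = 1, …, N) invertible n×n complex matrices, and P, Q constant n×n matrices with P = −(Λ_a^k + Λ_a^{k−l}) and Q = −(Λ̃_a^k + Λ̃_a^{k−l}) for every a. Let A_a be constant m×n and B_a constant n×m matrices, and define θ(t, j) := Σ_a A_a exp(Λ_a^l t) Λ_a^j and η(t, j) := Σ_a exp(−Λ̃_a^l t) Λ̃_a^{−j} B_a. Let X_{ab} be constant n×n matrices solving the Stein equations Λ̃_a^{−l} X_{ab} Λ_b^l − X_{ab} = B_a A_b for all a, b, and let ω̃ : ℝ → Mat(n×n, ℂ) be entrywise differentiable; set γ₁ := ω̃ P − Q ω̃ and γ₂ := −ω̃_t. Then Ω̃(t, j) := Σ_{a,b=1}^N exp(−Λ̃_a^l t) Λ̃_a^{−j} X_{ab} exp(Λ_b^l t) Λ_b^j + ω̃(t) satisfies Ω̃_{(l)} − Ω̃ = η θ, Ω̃_{(k−l)} − (I + Q) Ω̃_{(k)} + Ω̃ P + (η_{(k−l)} − η) θ_{(k−l)} − γ₁ = 0, and Ω̃_t = −η_t θ − γ₂. -/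
/-!
Write `e = exp(−t Λ̃^l)`, `f = exp(t Λ^l)` and `K(i, i') = e Λ̃^{−i} X f Λ^{i'}`, so that the
summands of `Ω̃ − ω̃` are the diagonal values `K(j, j)`. Since `e` commutes with `Λ̃` and `f` with
`Λ`, multiplying by `Λ̃^p` on the left lowers the first index by `p` and multiplying by `Λ^p` on
the right raises the second index by `p`, while the Stein equation turns the diagonal step
`K(i + l, i' + l) − K(i, i')` into `(e Λ̃^{−i} B)(A f Λ^{i'})`, a product of a summand of `η` and
a summand of `θ`. Each of the three identities is then, summand by summand, a linear relation
between shifted kernels; for the third, `d/dt K(j, j) = K(j, j + l) − Λ̃^l K(j, j)`.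
-/

open Matrix NormedSpace

attribute [local instance] Matrix.linftyOpNormedRing Matrix.linftyOpNormedAlgebra

section SteinKernel

variable {ι κ μ R : Type*} [Fintype ι] [DecidableEq ι] [Fintype κ] [DecidableEq κ] [Fintype μ]
  [CommRing R]

noncomputable def steinKernel (e U : Matrix ι ι R) (x : Matrix ι κ R) (f V : Matrix κ κ R)
    (i i' : ℤ) : Matrix ι κ R :=
  e * U ^ (-i) * x * f * V ^ i'

variable {e U : Matrix ι ι R} {x : Matrix ι κ R} {f V : Matrix κ κ R}

theorem steinKernel_mul_zpow (hV : IsUnit V.det) (i i' p : ℤ) :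
    steinKernel e U x f V i i' * V ^ p = steinKernel e U x f V i (i' + p) := by
  simp only [steinKernel, Matrix.mul_assoc, zpow_add hV]

theorem zpow_mul_steinKernel (hU : IsUnit U.det) (he : Commute e U) (i i' p : ℤ) :
    U ^ p * steinKernel e U x f V (i + p) i' = steinKernel e U x f V i i' := by
  have hpow : U ^ p * U ^ (-(i + p)) = U ^ (-i) := by rw [← zpow_add hU]; congr 1; ring
  have hcomm : U ^ p * e = e * U ^ p := (Matrix.Commute.zpow_left he.symm p).eq
  calc U ^ p * steinKernel e U x f V (i + p) i'
      = (U ^ p * e) * U ^ (-(i + p)) * x * f * V ^ i' := by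
        simp only [steinKernel, Matrix.mul_assoc]
    _ = e * (U ^ p * U ^ (-(i + p))) * x * f * V ^ i' := by rw [hcomm]; simp only [Matrix.mul_assoc]
    _ = steinKernel e U x f V i i' := by rw [hpow]; rfl

theorem steinKernel_add_sub {l : ℤ} {b : Matrix ι μ R} {a : Matrix μ κ R}
    (hU : IsUnit U.det) (hV : IsUnit V.det) (hf : Commute f V)
    (hx : U ^ (-l) * x * V ^ l - x = b * a) (i i' : ℤ) :
    steinKernel e U x f V (i + l) (i' + l) - steinKernel e U x f V i i'
      = e * U ^ (-i) * b * (a * f * V ^ i') := by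
  have hfl : f * (V ^ l * V ^ i') = V ^ l * (f * V ^ i') := by
    rw [← Matrix.mul_assoc, (Matrix.Commute.zpow_right hf l).eq, Matrix.mul_assoc]
  calc steinKernel e U x f V (i + l) (i' + l) - steinKernel e U x f V i i'
      = e * U ^ (-i) * (U ^ (-l) * x * V ^ l - x) * f * V ^ i' := by
        simp only [steinKernel, neg_add, zpow_add hU, add_comm i' l, zpow_add hV, Matrix.mul_sub,
          Matrix.sub_mul, Matrix.mul_assoc, hfl]
    _ = e * U ^ (-i) * b * (a * f * V ^ i') := by rw [hx]; simp only [Matrix.mul_assoc]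

theorem steinKernel_shift_relation {l : ℤ} {b : Matrix ι μ R} {a : Matrix μ κ R}
    (hU : IsUnit U.det) (hV : IsUnit V.det) (he : Commute e U) (hf : Commute f V)
    (hx : U ^ (-l) * x * V ^ l - x = b * a) (j k : ℤ) :
    steinKernel e U x f V (j + (k - l)) (j + (k - l))
      - (1 + -(U ^ k + U ^ (k - l))) * steinKernel e U x f V (j + k) (j + k)
      + steinKernel e U x f V j j * -(V ^ k + V ^ (k - l))
      + (e * U ^ (-(j + (k - l))) * b - e * U ^ (-j) * b) * (a * f * V ^ (j + (k - l))) = 0 := by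
  set K := steinKernel e U x f V
  have hjk : j + (k - l) + l = j + k := by ring
  have hUk : U ^ k * K (j + k) (j + k) = K j (j + k) := zpow_mul_steinKernel hU he j (j + k) k
  have hUkl : U ^ (k - l) * K (j + k) (j + k) = K (j + l) (j + k) := by
    simpa only [show j + l + (k - l) = j + k by ring]
      using zpow_mul_steinKernel (x := x) (f := f) (V := V) hU he (j + l) (j + k) (k - l)
  have hVk : K j j * V ^ k = K j (j + k) := steinKernel_mul_zpow hV j j k
  have hVkl : K j j * V ^ (k - l) = K j (j + (k - l)) := steinKernel_mul_zpow hV j j (k - l)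
  have hη₁ := steinKernel_add_sub (e := e) hU hV hf hx (j + (k - l)) (j + (k - l))
  have hη₂ := steinKernel_add_sub (e := e) hU hV hf hx j (j + (k - l))
  rw [hjk] at hη₁ hη₂
  rw [Matrix.sub_mul, ← hη₁, ← hη₂, Matrix.add_mul, Matrix.neg_mul, Matrix.add_mul, hUk, hUkl,
    Matrix.mul_neg, Matrix.mul_add, hVk, hVkl, Matrix.one_mul]
  abel

end SteinKernel

section Derivative

theorem hasDerivAt_exp_neg_smul {𝕂 𝔸 : Type*} [RCLike 𝕂] [NormedRing 𝔸] [NormedAlgebra 𝕂 𝔸]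
    [CompleteSpace 𝔸] (x : 𝔸) (t : 𝕂) :
    HasDerivAt (fun u => exp ((-u) • x)) (-(x * exp ((-t) • x))) t := by
  simpa only [neg_smul, ← smul_neg, neg_mul] using hasDerivAt_exp_smul_const' (-x) t

variable {ι μ 𝕜 : Type*} [Fintype ι] [RCLike 𝕜]

theorem hasDerivAt_mul_const_apply {f : ℝ → Matrix ι ι 𝕜} {f' : Matrix ι ι 𝕜} {t : ℝ}
    (hf : HasDerivAt f f' t) (B : Matrix ι μ 𝕜) (i : ι) (c : μ) :
    HasDerivAt (fun s => (f s * B) i c) ((f' * B) i c) t := by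
  simp only [Matrix.mul_apply]
  exact HasDerivAt.fun_sum fun r _ => (hasDerivAt_pi.1 (hasDerivAt_pi.1 hf i) r).mul_const (B r c)

variable [DecidableEq ι]

theorem hasDerivAt_sum_exp_neg_smul_mul_apply {α : Type*} [Fintype α] (M C : α → Matrix ι ι 𝕜)
    (B : α → Matrix ι μ 𝕜) (t : ℝ) (i : ι) (c : μ) :
    HasDerivAt (fun s : ℝ => (∑ a, exp ((-s) • M a) * C a * B a) i c)
      ((∑ a, -(M a * exp ((-t) • M a)) * C a * B a) i c) t := by
  simp only [Matrix.sum_apply]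
  exact HasDerivAt.fun_sum fun a _ =>
    hasDerivAt_mul_const_apply ((hasDerivAt_exp_neg_smul (M a) t).mul_const (C a)) (B a) i c

theorem commute_exp_smul_zpow (U : Matrix ι ι 𝕜) (l : ℤ) (c : ℝ) :
    Commute (exp (c • U ^ l)) U :=
  ((Matrix.Commute.self_zpow U l).smul_right c).exp_right.symm

theorem hasDerivAt_steinKernel [Fintype μ] {U V x : Matrix ι ι 𝕜} {l : ℤ} {b : Matrix ι μ 𝕜}
    {a : Matrix μ ι 𝕜} (hU : IsUnit U.det) (hV : IsUnit V.det)
    (hx : U ^ (-l) * x * V ^ l - x = b * a) (j : ℤ) (t : ℝ) :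
    HasDerivAt (fun s : ℝ => steinKernel (exp ((-s) • U ^ l)) U x (exp (s • V ^ l)) V j j)
      (U ^ l * (exp ((-t) • U ^ l) * U ^ (-j) * b * (a * exp (t • V ^ l) * V ^ j))) t := by
  set K := steinKernel (exp ((-t) • U ^ l)) U x (exp (t • V ^ l)) V
  have hE := hasDerivAt_exp_neg_smul (U ^ l) t
  have hF := hasDerivAt_exp_smul_const (𝕂 := ℝ) (V ^ l) t
  refine ((((hE.mul_const (U ^ (-j))).mul_const x).mul hF).mul_const (V ^ j)).congr_deriv ?_
  have he := commute_exp_smul_zpow U l (-t)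
  have hf := commute_exp_smul_zpow V l t
  symm
  calc U ^ l * (exp ((-t) • U ^ l) * U ^ (-j) * b * (a * exp (t • V ^ l) * V ^ j))
      = K j (j + l) - U ^ l * K j j := by
        rw [← steinKernel_add_sub hU hV hf hx, Matrix.mul_sub, zpow_mul_steinKernel hU he]
    _ = K j j * V ^ l - U ^ l * K j j := by rw [steinKernel_mul_zpow hV]
    _ = _ := by
        simp only [K, steinKernel, Matrix.add_mul, Matrix.neg_mul, Matrix.mul_assoc,
          (Matrix.Commute.zpow_zpow_self V j l).eq]
        exact sub_eq_neg_add _ _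

end Derivative

theorem stmt_13_general (m n N : ℕ) (k l : ℤ)
    (Λ Λt : Fin N → Matrix (Fin n) (Fin n) ℂ)
    (hΛ : ∀ a, IsUnit (Λ a)) (hΛt : ∀ a, IsUnit (Λt a))
    (P Q : Matrix (Fin n) (Fin n) ℂ)
    (hP : ∀ a, P = -((Λ a) ^ k + (Λ a) ^ (k - l)))
    (hQ : ∀ a, Q = -((Λt a) ^ k + (Λt a) ^ (k - l)))
    (A : Fin N → Matrix (Fin m) (Fin n) ℂ) (B : Fin N → Matrix (Fin n) (Fin m) ℂ)
    (θ : ℝ → ℤ → Matrix (Fin m) (Fin n) ℂ)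
    (η : ℝ → ℤ → Matrix (Fin n) (Fin m) ℂ)
    (hθ : ∀ t j, θ t j = ∑ a : Fin N, A a * NormedSpace.exp (t • (Λ a) ^ l) * (Λ a) ^ j)
    (hη : ∀ t j, η t j = ∑ a : Fin N, NormedSpace.exp ((-t) • (Λt a) ^ l) * (Λt a) ^ (-j) * B a)
    (X : Fin N → Fin N → Matrix (Fin n) (Fin n) ℂ)
    (hX : ∀ a b, (Λt a) ^ (-l) * X a b * (Λ b) ^ l - X a b = B a * A b)
    (om omt : ℝ → Matrix (Fin n) (Fin n) ℂ)
    (homt : ∀ t (a b : Fin n), HasDerivAt (fun s => om s a b) (omt t a b) t)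
    (γ₁ γ₂ : ℝ → Matrix (Fin n) (Fin n) ℂ)
    (hγ₁ : ∀ t, γ₁ t = om t * P - Q * om t)
    (hγ₂ : ∀ t, γ₂ t = -omt t)
    (Om : ℝ → ℤ → Matrix (Fin n) (Fin n) ℂ)
    (hOm : ∀ t j, Om t j =
      (∑ a : Fin N, ∑ b : Fin N,
        NormedSpace.exp ((-t) • (Λt a) ^ l) * (Λt a) ^ (-j) * X a b
          * NormedSpace.exp (t • (Λ b) ^ l) * (Λ b) ^ j) + om t) :
    (∀ t j, Om t (j + l) - Om t j = η t j * θ t j) ∧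
    (∀ t j, Om t (j + (k - l)) - (1 + Q) * Om t (j + k) + Om t j * P
        + (η t (j + (k - l)) - η t j) * θ t (j + (k - l)) - γ₁ t = 0) ∧
    (∀ ηt : ℝ → ℤ → Matrix (Fin n) (Fin m) ℂ,
      (∀ t j (a : Fin n) (b : Fin m),
        HasDerivAt (fun s => η s j a b) (ηt t j a b) t) →
      ∀ t j (a b : Fin n),
        HasDerivAt (fun s => Om s j a b) ((-(ηt t j * θ t j) - γ₂ t) a b) t) := by
  have hU a : IsUnit (Λt a).det := (isUnit_iff_isUnit_det _).mp (hΛt a)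
  have hV b : IsUnit (Λ b).det := (isUnit_iff_isUnit_det _).mp (hΛ b)
  have he a t := commute_exp_smul_zpow (Λt a) l (-t)
  have hf b t := commute_exp_smul_zpow (Λ b) l t
  refine ⟨fun t j => ?_, fun t j => ?_, fun ηt hηt t j r c => ?_⟩
  · rw [hOm, hOm, hη, hθ, add_sub_add_right_eq_sub, Matrix.sum_mul]
    simp only [Matrix.mul_sum, ← Finset.sum_sub_distrib]
    exact Finset.sum_congr rfl fun a _ => Finset.sum_congr rfl fun b _ =>
      steinKernel_add_sub (hU a) (hV b) (hf b t) (hX a b) j j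
  · have hcancel (S₁ S₂ S₃ C : Matrix (Fin n) (Fin n) ℂ) :
        S₁ + om t - (1 + Q) * (S₂ + om t) + (S₃ + om t) * P + C - (om t * P - Q * om t)
          = S₁ - (1 + Q) * S₂ + S₃ * P + C := by noncomm_ring
    rw [hOm, hOm, hOm, hη, hη, hθ, hγ₁, hcancel, ← Finset.sum_sub_distrib]
    simp only [Matrix.sum_mul]
    simp only [Matrix.mul_sum, ← Finset.sum_sub_distrib, ← Finset.sum_add_distrib]
    refine Finset.sum_eq_zero fun a _ => Finset.sum_eq_zero fun b _ => ?_
    rw [hQ a, hP b]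
    exact steinKernel_shift_relation (hU a) (hV b) (he a t) (hf b t) (hX a b) j k
  · have hηt_eq : ηt t j = ∑ a, -(Λt a ^ l * exp ((-t) • Λt a ^ l)) * Λt a ^ (-j) * B a := by
      ext r' c'
      refine (hηt t j r' c').unique ?_
      simpa only [hη] using hasDerivAt_sum_exp_neg_smul_mul_apply _ _ B t r' c'
    have hK := HasDerivAt.fun_sum (u := Finset.univ) fun a _ => HasDerivAt.fun_sum
      (u := Finset.univ) fun b _ => hasDerivAt_steinKernel (hU a) (hV b) (hX a b) j t
    have hω : HasDerivAt om (omt t) t := hasDerivAt_pi.2 fun a => hasDerivAt_pi.2 (homt t a)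
    have hOmj : HasDerivAt (fun s => Om s j) (-(ηt t j * θ t j) - γ₂ t) t := by
      rw [show (fun s => Om s j) = _ from funext fun s => hOm s j]
      refine (hK.add hω).congr_deriv ?_
      rw [hγ₂, sub_neg_eq_add, hηt_eq, hθ]
      simp only [Matrix.sum_mul]
      simp only [Matrix.mul_sum, ← Finset.sum_neg_distrib, Matrix.neg_mul, neg_neg,
        Matrix.mul_assoc]
    exact hasDerivAt_pi.1 (hasDerivAt_pi.1 hOmj r) c

/-- with θ, η as in Statement 12, constant matrices `X_{ab}` solving the Stein
equations `Λ̃_a^{−l} X_{ab} Λ_b^l − X_{ab} = B_a A_b`, and `ω̃ (= om)` a function of `t` only,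
`γ₁ = ω̃ P − Q ω̃`, `γ₂ = −ω̃_t`, the function
`Ω̃ = Σ_{a,b} exp(−Λ̃_a^l t) Λ̃_a^{−j} X_{ab} exp(Λ_b^l t) Λ_b^j + ω̃` satisfies
`Ω̃_{(l)} − Ω̃ = η θ`,
`Ω̃_{(k−l)} − (I+Q) Ω̃_{(k)} + Ω̃ P + (η_{(k−l)} − η) θ_{(k−l)} − γ₁ = 0` and
`Ω̃_t = −η_t θ − γ₂`. -/
theorem stmt_13 (m n N : ℕ) (hN : 1 ≤ N) (k l : ℤ) (hk : 1 ≤ k)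
    (Λ Λt : Fin N → Matrix (Fin n) (Fin n) ℂ)
    (hΛ : ∀ a, IsUnit (Λ a)) (hΛt : ∀ a, IsUnit (Λt a))
    (P Q : Matrix (Fin n) (Fin n) ℂ)
    (hP : ∀ a, P = -((Λ a) ^ k + (Λ a) ^ (k - l)))
    (hQ : ∀ a, Q = -((Λt a) ^ k + (Λt a) ^ (k - l)))
    (A : Fin N → Matrix (Fin m) (Fin n) ℂ) (B : Fin N → Matrix (Fin n) (Fin m) ℂ)
    (θ : ℝ → ℤ → Matrix (Fin m) (Fin n) ℂ)
    (η : ℝ → ℤ → Matrix (Fin n) (Fin m) ℂ)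
    (hθ : ∀ t j, θ t j = ∑ a : Fin N, A a * NormedSpace.exp (t • (Λ a) ^ l) * (Λ a) ^ j)
    (hη : ∀ t j, η t j = ∑ a : Fin N, NormedSpace.exp ((-t) • (Λt a) ^ l) * (Λt a) ^ (-j) * B a)
    (X : Fin N → Fin N → Matrix (Fin n) (Fin n) ℂ)
    (hX : ∀ a b, (Λt a) ^ (-l) * X a b * (Λ b) ^ l - X a b = B a * A b)
    (om omt : ℝ → Matrix (Fin n) (Fin n) ℂ)
    (homt : ∀ t (a b : Fin n), HasDerivAt (fun s => om s a b) (omt t a b) t)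
    (γ₁ γ₂ : ℝ → Matrix (Fin n) (Fin n) ℂ)
    (hγ₁ : ∀ t, γ₁ t = om t * P - Q * om t)
    (hγ₂ : ∀ t, γ₂ t = -omt t)
    (Om : ℝ → ℤ → Matrix (Fin n) (Fin n) ℂ)
    (hOm : ∀ t j, Om t j =
      (∑ a : Fin N, ∑ b : Fin N,
        NormedSpace.exp ((-t) • (Λt a) ^ l) * (Λt a) ^ (-j) * X a b
          * NormedSpace.exp (t • (Λ b) ^ l) * (Λ b) ^ j) + om t) :
    (∀ t j, Om t (j + l) - Om t j = η t j * θ t j) ∧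
    (∀ t j, Om t (j + (k - l)) - (1 + Q) * Om t (j + k) + Om t j * P
        + (η t (j + (k - l)) - η t j) * θ t (j + (k - l)) - γ₁ t = 0) ∧
    (∀ ηt : ℝ → ℤ → Matrix (Fin n) (Fin m) ℂ,
      (∀ t j (a : Fin n) (b : Fin m),
        HasDerivAt (fun s => η s j a b) (ηt t j a b) t) →
      ∀ t j (a b : Fin n),
        HasDerivAt (fun s => Om s j a b) ((-(ηt t j * θ t j) - γ₂ t) a b) t) :=
  stmt_13_general m n N k l Λ Λt hΛ hΛt P Q hP hQ A B θ η hθ hη X hX om omt homt γ₁ γ₂ hγ₁ hγ₂ Om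
    hOm
end

section
/- Let λ, λ̃ be nonzero complex numbers with λ̃ ≠ λ and λ λ̃ ≠ 1, and let A₁, A₂, B₁, B₂ ∈ ℂ. Define τ : ℝ × ℤ → ℂ by τ(t, j) = A₂ B₁ + ((λ λ̃ − 1)/(λ̃ − λ)) (A₁ B₁ λ^j e^{(λ − λ^{-1}) t} − A₂ B₂ λ̃^j e^{(λ̃ − λ̃^{-1}) t}) − A₁ B₂ (λ λ̃)^j e^{(λ − λ^{-1} + λ̃ − λ̃^{-1}) t}, and assume τ(t, j) ≠ 0 for all (t, j) ∈ ℝ × ℤ. Then V := τ_{(−1)} τ_{(2)} / (τ τ_{(1)}) satisfies the scalar Volterra lattice equation V_t = V V_{(1)} − V_{(−1)} V (this is the 2-soliton solution). -/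
/-!
Hirota's method. If `τ` satisfies the bilinear equation
`τ'ₖ τₖ₊₁ - τₖ τ'ₖ₊₁ = τₖ τₖ₊₁ - τₖ₋₁ τₖ₊₂`, then the quotient rule together with two instances of
this equation (at `k = j - 1` and `k = j + 1`) shows that `V = τ₋₁ τ₂ / (τ τ₁)` solves the Volterra
lattice. For `τ = c₀ + X + Y + Z`, a sum of a constant and the exponentials `X ∝ λʲ`, `Y ∝ λ̃ʲ`,
`Z ∝ (λλ̃)ʲ` with their own time rates, the defect of the bilinear equation is
`(λ - 1)(λ̃ - 1)(c₀ Z (λλ̃ - 1)² - X Y (λ̃ - λ)²) / (λλ̃)`, and the coefficients of the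
2-soliton make the last factor vanish.
-/

open Complex

noncomputable def twoSolitonTau (l m c₀ a b c : ℂ) (t : ℝ) (j : ℤ) : ℂ :=
  c₀ + a * l ^ j * cexp ((l - l⁻¹) * t) + b * m ^ j * cexp ((m - m⁻¹) * t)
    + c * (l * m) ^ j * cexp ((l - l⁻¹ + m - m⁻¹) * t)

noncomputable def twoSolitonTauDeriv (l m a b c : ℂ) (t : ℝ) (j : ℤ) : ℂ :=
  (l - l⁻¹) * a * l ^ j * cexp ((l - l⁻¹) * t) + (m - m⁻¹) * b * m ^ j * cexp ((m - m⁻¹) * t)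
    + (l - l⁻¹ + m - m⁻¹) * c * (l * m) ^ j * cexp ((l - l⁻¹ + m - m⁻¹) * t)

noncomputable def volterraOfTau (τ : ℝ → ℤ → ℂ) (t : ℝ) (j : ℤ) : ℂ :=
  τ t (j - 1) * τ t (j + 2) / (τ t j * τ t (j + 1))

lemma hasDerivAt_cexp_mul_ofReal (μ : ℂ) (t : ℝ) :
    HasDerivAt (fun s : ℝ => cexp (μ * s)) (μ * cexp (μ * t)) t := by
  simpa [mul_comm] using ((hasDerivAt_id (t : ℂ)).const_mul μ).cexp.comp_ofReal

lemma hasDerivAt_twoSolitonTau (l m c₀ a b c : ℂ) (t : ℝ) (j : ℤ) :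
    HasDerivAt (fun s => twoSolitonTau l m c₀ a b c s j) (twoSolitonTauDeriv l m a b c t j) t := by
  refine ((((hasDerivAt_const t c₀).add
    ((hasDerivAt_cexp_mul_ofReal (l - l⁻¹) t).const_mul (a * l ^ j))).add
    ((hasDerivAt_cexp_mul_ofReal (m - m⁻¹) t).const_mul (b * m ^ j))).add
    ((hasDerivAt_cexp_mul_ofReal (l - l⁻¹ + m - m⁻¹) t).const_mul (c * (l * m) ^ j))).congr_deriv ?_
  simp only [twoSolitonTauDeriv]
  ring

lemma bilinear_of_two_exponentials {l m c₀ X Y Z : ℂ} {τ τ' : ℤ → ℂ} (hl : l ≠ 0) (hm : m ≠ 0)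
    (hτ : ∀ n, τ n = c₀ + l ^ n * X + m ^ n * Y + (l * m) ^ n * Z)
    (hτ' : ∀ n, τ' n = (l - l⁻¹) * l ^ n * X + (m - m⁻¹) * m ^ n * Y
        + (l - l⁻¹ + m - m⁻¹) * (l * m) ^ n * Z)
    (h : c₀ * Z * (l * m - 1) ^ 2 = X * Y * (m - l) ^ 2) :
    τ' 0 * τ 1 - τ 0 * τ' 1 = τ 0 * τ 1 - τ (-1) * τ 2 := by
  simp only [hτ, hτ', mul_zpow, zpow_neg, zpow_one, zpow_zero]
  field_simp
  linear_combination (l - 1) * (m - 1) * h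

lemma twoSolitonTau_bilinear {l m c₀ a b c : ℂ} (hl : l ≠ 0) (hm : m ≠ 0)
    (h : c₀ * c * (l * m - 1) ^ 2 = a * b * (m - l) ^ 2) (t : ℝ) (k : ℤ) :
    twoSolitonTauDeriv l m a b c t k * twoSolitonTau l m c₀ a b c t (k + 1)
        - twoSolitonTau l m c₀ a b c t k * twoSolitonTauDeriv l m a b c t (k + 1)
      = twoSolitonTau l m c₀ a b c t k * twoSolitonTau l m c₀ a b c t (k + 1)
        - twoSolitonTau l m c₀ a b c t (k - 1) * twoSolitonTau l m c₀ a b c t (k + 2) := by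
  set e₁ := cexp ((l - l⁻¹) * t)
  set e₂ := cexp ((m - m⁻¹) * t)
  have he : cexp ((l - l⁻¹ + m - m⁻¹) * t) = e₁ * e₂ := by rw [← Complex.exp_add]; ring_nf
  have key := bilinear_of_two_exponentials (c₀ := c₀) (X := a * l ^ k * e₁) (Y := b * m ^ k * e₂)
    (Z := c * (l ^ k * m ^ k) * (e₁ * e₂)) (τ := fun n => twoSolitonTau l m c₀ a b c t (k + n))
    (τ' := fun n => twoSolitonTauDeriv l m a b c t (k + n)) hl hm
    (fun n => by simp only [twoSolitonTau, he, zpow_add₀ hl, zpow_add₀ hm, mul_zpow]; ring)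
    (fun n => by simp only [twoSolitonTauDeriv, he, zpow_add₀ hl, zpow_add₀ hm, mul_zpow]; ring)
    (by linear_combination l ^ k * m ^ k * e₁ * e₂ * h)
  simpa [← sub_eq_add_neg] using key

lemma hasDerivAt_volterraOfTau {τ : ℝ → ℤ → ℂ} {τ' : ℤ → ℂ} {t : ℝ}
    (hτ : ∀ k, HasDerivAt (fun s => τ s k) (τ' k) t) (hne : ∀ k, τ t k ≠ 0)
    (hbil : ∀ k, τ' k * τ t (k + 1) - τ t k * τ' (k + 1)
      = τ t k * τ t (k + 1) - τ t (k - 1) * τ t (k + 2)) (j : ℤ) :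
    HasDerivAt (fun s => volterraOfTau τ s j)
      (volterraOfTau τ t j * volterraOfTau τ t (j + 1)
        - volterraOfTau τ t (j - 1) * volterraOfTau τ t j) t := by
  refine (((hτ (j - 1)).mul (hτ (j + 2))).div ((hτ j).mul (hτ (j + 1)))
    (mul_ne_zero (hne j) (hne (j + 1)))).congr_deriv ?_
  have hprev := hbil (j - 1)
  have hnext := hbil (j + 1)
  rw [sub_add_cancel, show j - 1 - 1 = j - 2 by ring, show j - 1 + 2 = j + 1 by ring] at hprev
  rw [add_sub_cancel_right, show j + 1 + 1 = j + 2 by ring, show j + 1 + 2 = j + 3 by ring] at hnext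
  simp only [volterraOfTau, Pi.mul_apply, sub_add_cancel, add_sub_cancel_right,
    show j + 1 + 2 = j + 3 by ring, show j + 1 + 1 = j + 2 by ring,
    show j - 1 - 1 = j - 2 by ring, show j - 1 + 2 = j + 1 by ring]
  field_simp [hne]
  linear_combination (τ t (j + 1) * τ t (j + 2)) * hprev - (τ t (j - 1) * τ t j) * hnext

theorem stmt_15_general (lam lamt : ℂ) (hlam : lam ≠ 0) (hlamt : lamt ≠ 0)
    (hne : lamt ≠ lam)
    (A₁ A₂ B₁ B₂ : ℂ)
    (τ : ℝ → ℤ → ℂ)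
    (hτ : ∀ t j, τ t j
      = A₂ * B₁
        + ((lam * lamt - 1) / (lamt - lam))
          * (A₁ * B₁ * lam ^ j * Complex.exp ((lam - lam⁻¹) * t)
            - A₂ * B₂ * lamt ^ j * Complex.exp ((lamt - lamt⁻¹) * t))
        - A₁ * B₂ * (lam * lamt) ^ j
          * Complex.exp ((lam - lam⁻¹ + lamt - lamt⁻¹) * t))
    (hτne : ∀ t j, τ t j ≠ 0)
    (V : ℝ → ℤ → ℂ)
    (hV : ∀ t j, V t j = τ t (j - 1) * τ t (j + 2) / (τ t j * τ t (j + 1))) :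
    ∀ t j, HasDerivAt (fun s => V s j) (V t j * V t (j + 1) - V t (j - 1) * V t j) t := by
  set κ := (lam * lamt - 1) / (lamt - lam)
  have hτ_eq :
      τ = twoSolitonTau lam lamt (A₂ * B₁) (κ * (A₁ * B₁)) (-(κ * (A₂ * B₂))) (-(A₁ * B₂)) := by
    funext t j
    rw [hτ, twoSolitonTau]
    ring
  have hV_eq : V = volterraOfTau τ := funext fun t => funext fun j => hV t j
  have hcoupling : A₂ * B₁ * -(A₁ * B₂) * (lam * lamt - 1) ^ 2
      = κ * (A₁ * B₁) * -(κ * (A₂ * B₂)) * (lamt - lam) ^ 2 := by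
    have hκ : κ * (lamt - lam) = lam * lamt - 1 := div_mul_cancel₀ _ (sub_ne_zero.mpr hne)
    linear_combination (A₁ * A₂ * B₁ * B₂ * (κ * (lamt - lam) + (lam * lamt - 1))) * hκ
  subst hV_eq hτ_eq
  intro t
  exact hasDerivAt_volterraOfTau (fun k => hasDerivAt_twoSolitonTau _ _ _ _ _ _ t k) (hτne t)
    (twoSolitonTau_bilinear hlam hlamt hcoupling t)

/-- the 2-soliton tau function of the Volterra lattice. With
`τ(t,j) = A₂B₁ + ((λλ̃−1)/(λ̃−λ))(A₁B₁ λ^j e^{(λ−λ⁻¹)t} − A₂B₂ λ̃^j e^{(λ̃−λ̃⁻¹)t})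
          − A₁B₂ (λλ̃)^j e^{(λ−λ⁻¹+λ̃−λ̃⁻¹)t}`
nowhere vanishing, `V := τ_{(−1)} τ_{(2)} / (τ τ_{(1)})` satisfies the scalar Volterra lattice
equation `V_t = V V_{(1)} − V_{(−1)} V`. -/
theorem stmt_15 (lam lamt : ℂ) (hlam : lam ≠ 0) (hlamt : lamt ≠ 0)
    (hne : lamt ≠ lam) (hne1 : lam * lamt ≠ 1)
    (A₁ A₂ B₁ B₂ : ℂ)
    (τ : ℝ → ℤ → ℂ)
    (hτ : ∀ t j, τ t j
      = A₂ * B₁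
        + ((lam * lamt - 1) / (lamt - lam))
          * (A₁ * B₁ * lam ^ j * Complex.exp ((lam - lam⁻¹) * t)
            - A₂ * B₂ * lamt ^ j * Complex.exp ((lamt - lamt⁻¹) * t))
        - A₁ * B₂ * (lam * lamt) ^ j
          * Complex.exp ((lam - lam⁻¹ + lamt - lamt⁻¹) * t))
    (hτne : ∀ t j, τ t j ≠ 0)
    (V : ℝ → ℤ → ℂ)
    (hV : ∀ t j, V t j = τ t (j - 1) * τ t (j + 2) / (τ t j * τ t (j + 1))) :
    ∀ t j, HasDerivAt (fun s => V s j) (V t j * V t (j + 1) - V t (j - 1) * V t j) t :=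
  stmt_15_general lam lamt hlam hlamt hne A₁ A₂ B₁ B₂ τ hτ hτne V hV
end
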